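/- arXiv:1112.0906 — 9 statements merged into one kernel-verified Lean document; each statement's English description precedes it below -/
import Mathlib

section
/- (Generalized Bayes formula) Let X be F-valued and ε be G-valued independent random variables, L : F → G Borel measurable, and Y = L(X) + ε. Suppose the law μ_{ε+L(x)} of ε + L(x) is absolutely continuous with respect to a σ-finite measure ν on G for μ_X-almost every x, with density ρ(x,z) jointly (μ_X × ν)-measurable. Then the set N₀ = { z ∈ G : ∫_F ρ(x,z) dμ_X(x) = 0 or = ∞ } has μ_Y-measure zero, and the map μ(U,z) = (∫_U ρ(x,z) dμ_X(x)) / (∫_F ρ(x,z) dμ_X(x)), defined for z ∉ N₀, gives a regular conditional distribution of X given Y: for every Borel U ⊆ F, μ(U, Y(ω)) = E[1_U(X) | σ(Y)](ω) P-almost surely. -/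
/-!
By independence, `P (X ∈ U, Y ∈ S) = ∫_U μ_{ε+L(x)}(S) dμ_X(x) = ∫_S ∫_U ρ(x,z) dμ_X(x) dν(z)`
(Tonelli). Taking `U = F` shows that `μ_Y` has density `f(z) = ∫_F ρ(x,z) dμ_X(x)` with respect
to `ν`; as `μ_Y` is finite, `f < ∞` `ν`-a.e., so `N₀` is `μ_Y`-null. For general `U`, the
displayed identity says that `(∫_U ρ(·,z) dμ_X) / f(z)`, evaluated at `Y`, has the same integral
as `1_U(X)` over every set `Y⁻¹(S)`, which characterises `E[1_U(X) | σ(Y)]`.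
-/

open MeasureTheory ProbabilityTheory
open scoped ENNReal

namespace ProbabilityTheory.IndepFun

variable {Ω F G : Type*} {mΩ : MeasurableSpace Ω} [MeasurableSpace F] [MeasurableSpace G]
  {P : Measure Ω} [IsFiniteMeasure P] {X : Ω → F} {ε : Ω → G}

theorem measure_prodMk_preimage_eq_lintegral (hind : IndepFun X ε P) (hX : Measurable X)
    (hε : Measurable ε) {T : Set (F × G)} (hT : MeasurableSet T) :
    P ((fun ω => (X ω, ε ω)) ⁻¹' T) = ∫⁻ x, P.map ε (Prod.mk x ⁻¹' T) ∂P.map X := by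
  rw [← Measure.map_apply (hX.prodMk hε) hT,
    (indepFun_iff_map_prod_eq_prod_map_map hX.aemeasurable hε.aemeasurable).mp hind,
    Measure.prod_apply hT]

theorem measure_preimage_inter_add_preimage [AddCommMagma G] [MeasurableAdd₂ G]
    (hind : IndepFun X ε P) (hX : Measurable X) (hε : Measurable ε) {L : F → G}
    (hL : Measurable L) {U : Set F} {S : Set G} (hU : MeasurableSet U) (hS : MeasurableSet S) :
    P (X ⁻¹' U ∩ (fun ω => L (X ω) + ε ω) ⁻¹' S) =
      ∫⁻ x in U, P.map (fun ω => ε ω + L x) S ∂P.map X := by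
  have hT : MeasurableSet {p : F × G | p.1 ∈ U ∧ L p.1 + p.2 ∈ S} :=
    (measurable_fst hU).inter (((hL.comp measurable_fst).add measurable_snd) hS)
  have hslice (x : F) : P.map ε (Prod.mk x ⁻¹' {p : F × G | p.1 ∈ U ∧ L p.1 + p.2 ∈ S}) =
      U.indicator (fun x => P.map (fun ω => ε ω + L x) S) x := by
    by_cases hx : x ∈ U
    · rw [Set.indicator_of_mem hx, Measure.map_apply (hε.add_const (L x)) hS,
        Measure.map_apply hε (measurable_prodMk_left hT)]
      congr 1
      ext ω
      simp [hx, add_comm]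
    · simp [hx]
  exact (hind.measure_prodMk_preimage_eq_lintegral hX hε hT).trans
    ((lintegral_congr hslice).trans (lintegral_indicator hU _))

theorem measure_preimage_inter_add_preimage_of_withDensity [AddCommMagma G] [MeasurableAdd₂ G]
    (hind : IndepFun X ε P) (hX : Measurable X) (hε : Measurable ε) {L : F → G}
    (hL : Measurable L) {ν : Measure G} [SFinite ν] {ρ : F → G → ℝ≥0∞}
    (hρ : Measurable (Function.uncurry ρ))
    (hdens : ∀ᵐ x ∂P.map X, P.map (fun ω => ε ω + L x) = ν.withDensity (ρ x))
    {U : Set F} {S : Set G} (hU : MeasurableSet U) (hS : MeasurableSet S) :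
    P (X ⁻¹' U ∩ (fun ω => L (X ω) + ε ω) ⁻¹' S) = ∫⁻ z in S, ∫⁻ x in U, ρ x z ∂P.map X ∂ν := by
  rw [hind.measure_preimage_inter_add_preimage hX hε hL hU hS]
  calc ∫⁻ x in U, P.map (fun ω => ε ω + L x) S ∂P.map X
      = ∫⁻ x in U, ∫⁻ z in S, ρ x z ∂ν ∂P.map X :=
        lintegral_congr_ae <| ae_restrict_of_ae <| hdens.mono fun x hx => by
          simp only [hx, withDensity_apply _ hS]
    _ = ∫⁻ z in S, ∫⁻ x in U, ρ x z ∂P.map X ∂ν := lintegral_lintegral_swap hρ.aemeasurable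

end ProbabilityTheory.IndepFun

namespace MeasureTheory

variable {α : Type*} [MeasurableSpace α] {ν : Measure α} {f g : α → ℝ≥0∞}

theorem withDensity_setOf_eq_zero_or_eq_top (hf : Measurable f) (hf_top : ∀ᵐ z ∂ν, f z ≠ ∞) :
    ν.withDensity f {z | f z = 0 ∨ f z = ∞} = 0 := by
  rw [withDensity_apply_eq_zero hf]
  refine measure_mono_null (t := {z | f z = ∞}) (fun z ⟨hz0, hz⟩ => hz.resolve_left hz0) ?_
  simpa [ae_iff] using hf_top

theorem lintegral_div_withDensity (hf : Measurable f) (hg : Measurable g)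
    (hf_top : ∀ᵐ z ∂ν, f z ≠ ∞) (hgf : ∀ z, g z ≤ f z) :
    ∫⁻ z, g z / f z ∂ν.withDensity f = ∫⁻ z, g z ∂ν := by
  rw [lintegral_withDensity_eq_lintegral_mul _ hf (g := fun z => g z / f z) (hg.div hf)]
  refine lintegral_congr_ae ?_
  filter_upwards [hf_top] with z hz
  by_cases h0 : f z = 0
  · simp [h0, nonpos_iff_eq_zero.mp (h0 ▸ hgf z)]
  · exact ENNReal.mul_div_cancel h0 hz

theorem ae_ne_top_of_eq_withDensity {μ : Measure α} [IsFiniteMeasure μ] (hf : Measurable f)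
    (hμ : μ = ν.withDensity f) : ∀ᵐ z ∂ν, f z ≠ ∞ := by
  refine (ae_lt_top hf ?_).mono fun _ => ne_of_lt
  rw [← setLIntegral_univ, ← withDensity_apply _ MeasurableSet.univ, ← hμ]
  exact measure_ne_top _ _

theorem condExp_indicator_ae_eq_div_comp {Ω : Type*} {mΩ : MeasurableSpace Ω} {P : Measure Ω}
    [IsFiniteMeasure P] {Y : Ω → α} (hY : Measurable Y) (hf : Measurable f) (hg : Measurable g)
    (hgf : ∀ z, g z ≤ f z) (hlaw : P.map Y = ν.withDensity f) {A : Set Ω} (hA : MeasurableSet A)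
    (hjoint : ∀ S, MeasurableSet S → P (A ∩ Y ⁻¹' S) = ∫⁻ z in S, g z ∂ν) :
    (fun ω => (g (Y ω) / f (Y ω)).toReal) =ᵐ[P]
      P[A.indicator 1 | MeasurableSpace.comap Y inferInstance] := by
  have hf_top := ae_ne_top_of_eq_withDensity hf hlaw
  have hratio_le (z : α) : g z / f z ≤ 1 := ENNReal.div_le_of_le_mul (by simpa using hgf z)
  have hratio : Measurable fun z => g z / f z := hg.div hf
  have hint : Integrable (fun ω => (g (Y ω) / f (Y ω)).toReal) P :=
    .of_bound (hratio.ennreal_toReal.comp hY).aestronglyMeasurable 1 <| .of_forall fun ω => by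
      simpa using ENNReal.toReal_mono ENNReal.one_ne_top (hratio_le (Y ω))
  refine ae_eq_condExp_of_forall_setIntegral_eq hY.comap_le ((integrable_const 1).indicator hA)
    (fun _ _ _ => hint.integrableOn) ?_
    (hratio.ennreal_toReal.comp (comap_measurable Y)).aestronglyMeasurable
  rintro _ ⟨S, hS, rfl⟩ -
  calc ∫ ω in Y ⁻¹' S, (g (Y ω) / f (Y ω)).toReal ∂P
      = ∫ z in S, (g z / f z).toReal ∂ν.withDensity f := by
        rw [← hlaw, setIntegral_map hS hratio.ennreal_toReal.aestronglyMeasurable hY.aemeasurable]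
    _ = (∫⁻ z in S, g z / f z ∂ν.withDensity f).toReal :=
        integral_toReal hratio.aemeasurable <| .of_forall fun z =>
          (hratio_le z).trans_lt ENNReal.one_lt_top
    _ = (P (A ∩ Y ⁻¹' S)).toReal := by
        rw [restrict_withDensity hS, lintegral_div_withDensity hf hg (ae_restrict_of_ae hf_top) hgf,
          hjoint S hS]
    _ = ∫ ω in Y ⁻¹' S, A.indicator 1 ω ∂P := by
        rw [integral_indicator_one hA, measureReal_restrict_apply hA, measureReal_def]

end MeasureTheory

theorem stmt4_general {Ω F G : Type*} [mΩ : MeasurableSpace Ω] [MeasurableSpace F]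
    [MeasurableSpace G] [AddCommGroup G] [MeasurableAdd₂ G]
    (P : Measure Ω) [IsProbabilityMeasure P]
    (X : Ω → F) (ε : Ω → G) (hX : Measurable X) (hε : Measurable ε)
    (hind : IndepFun X ε P)
    (L : F → G) (hL : Measurable L)
    (Y : Ω → G) (hY : Y = fun ω => L (X ω) + ε ω)
    (ν : Measure G) [SigmaFinite ν]
    (ρ : F → G → ℝ≥0∞) (hρ : Measurable (Function.uncurry ρ))
    (hdens : ∀ᵐ x ∂(P.map X), P.map (fun ω => ε ω + L x) = ν.withDensity (ρ x)) :
    P.map Y {z | ∫⁻ x, ρ x z ∂(P.map X) = 0 ∨ ∫⁻ x, ρ x z ∂(P.map X) = ∞} = 0 ∧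
      ∀ U : Set F, MeasurableSet U →
        (fun ω => ((∫⁻ x in U, ρ x (Y ω) ∂(P.map X)) /
            (∫⁻ x, ρ x (Y ω) ∂(P.map X))).toReal)
          =ᵐ[P]
          P[fun ω => Set.indicator U (fun _ => (1 : ℝ)) (X ω)|
            MeasurableSpace.comap Y inferInstance] := by
  subst hY
  have hYm : Measurable fun ω => L (X ω) + ε ω := (hL.comp hX).add hε
  have hjoint {U : Set F} {S : Set G} (hU : MeasurableSet U) (hS : MeasurableSet S) :=
    hind.measure_preimage_inter_add_preimage_of_withDensity hX hε hL hρ hdens hU hS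
  have hf : Measurable fun z => ∫⁻ x, ρ x z ∂P.map X := hρ.lintegral_prod_left'
  have hlaw : P.map (fun ω => L (X ω) + ε ω) = ν.withDensity fun z => ∫⁻ x, ρ x z ∂P.map X := by
    ext S hS
    rw [Measure.map_apply hYm hS, withDensity_apply _ hS, ← Set.univ_inter (_ ⁻¹' S)]
    simpa using hjoint MeasurableSet.univ hS
  refine ⟨?_, fun U hU => ?_⟩
  · rw [hlaw]
    exact withDensity_setOf_eq_zero_or_eq_top hf (ae_ne_top_of_eq_withDensity hf hlaw)
  · exact condExp_indicator_ae_eq_div_comp hYm hf hρ.lintegral_prod_left'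
      (fun z => setLIntegral_le_lintegral U _) hlaw (hX hU) fun S hS => hjoint hU hS

/-- Generalized Bayes formula: with `X : Ω → F`, `ε : Ω → G` independent, `L` Borel measurable,
`Y = L(X) + ε`, and `μ_{ε+L(x)} = ν.withDensity (ρ x)` for μ_X-a.e. `x` with jointly measurable
`ρ`, the set `N₀ = {z | ∫ ρ(x,z) dμ_X(x) = 0 or ∞}` is μ_Y-null, and for every Borel `U ⊆ F`,
`μ(U, Y ω) = (∫_U ρ(x, Y ω) dμ_X)/(∫_F ρ(x, Y ω) dμ_X)` is P-a.s. a version of the conditional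
expectation `E[1_U(X) | σ(Y)]`. -/
theorem stmt4 {Ω F G : Type*} [mΩ : MeasurableSpace Ω]
    [MeasurableSpace F] [StandardBorelSpace F]
    [MeasurableSpace G] [StandardBorelSpace G] [AddCommGroup G] [MeasurableAdd₂ G]
    (P : Measure Ω) [IsProbabilityMeasure P] (hP : P.IsComplete)
    (X : Ω → F) (ε : Ω → G) (hX : Measurable X) (hε : Measurable ε)
    (hind : IndepFun X ε P)
    (L : F → G) (hL : Measurable L)
    (Y : Ω → G) (hY : Y = fun ω => L (X ω) + ε ω)
    (ν : Measure G) [SigmaFinite ν]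
    (ρ : F → G → ℝ≥0∞) (hρ : Measurable (Function.uncurry ρ))
    (hdens : ∀ᵐ x ∂(P.map X), P.map (fun ω => ε ω + L x) = ν.withDensity (ρ x)) :
    P.map Y {z | ∫⁻ x, ρ x z ∂(P.map X) = 0 ∨ ∫⁻ x, ρ x z ∂(P.map X) = ∞} = 0 ∧
      ∀ U : Set F, MeasurableSet U →
        (fun ω => ((∫⁻ x in U, ρ x (Y ω) ∂(P.map X)) /
            (∫⁻ x, ρ x (Y ω) ∂(P.map X))).toReal)
          =ᵐ[P]
          P[fun ω => Set.indicator U (fun _ => (1 : ℝ)) (X ω)|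
            MeasurableSpace.comap Y inferInstance] :=
  stmt4_general (mΩ := mΩ) P X ε hX hε hind L hL Y hY ν ρ hρ hdens
end

section
/- In the setting of the generalized Bayes formula, if additionally μ_{ε+L(x)} ≪ ν for all x ∈ F and ρ > 0 holds (μ_X × ν)-almost everywhere, then every Borel set N ⊆ G with μ_Y(N) = 0 satisfies μ_{ε+L(x₀)}(N) = 0 for every x₀ ∈ F. -/
open MeasureTheory ProbabilityTheory
open scoped ENNReal

/-!
Write `κ x` for the law of `ε + L x`. By independence, `μ_Y N = ∫ κ x N dμ_X(x)`, so
`κ x N = 0` for `μ_X`-a.e. `x`. Positivity of `ρ` gives, for `μ_X`-a.e. `x`, that `ρ x > 0`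
`ν`-a.e., i.e. `ν ≪ κ x = ν.withDensity (ρ x)`. Choosing one `x` with both properties yields
`ν N = 0`, and then `κ x₀ N = 0` because `κ x₀ ≪ ν`.
-/

namespace ProbabilityTheory.IndepFun

variable {Ω F G H : Type*} [MeasurableSpace Ω] [MeasurableSpace F] [MeasurableSpace G]
  [MeasurableSpace H] {P : Measure Ω} [IsFiniteMeasure P] {X : Ω → F} {ε : Ω → G}
  {f : F → G → H} {s : Set H}

lemma map_apply_eq_lintegral (hind : IndepFun X ε P) (hX : Measurable X) (hε : Measurable ε)
    (hf : Measurable (Function.uncurry f)) (hs : MeasurableSet s) :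
    P.map (fun ω => f (X ω) (ε ω)) s = ∫⁻ x, P.map ε (f x ⁻¹' s) ∂P.map X := by
  have hlaw : P.map (fun ω => f (X ω) (ε ω)) = ((P.map X).prod (P.map ε)).map
      (Function.uncurry f) := by
    rw [← hind.map_prod_eq_prod_map_map hX.aemeasurable hε.aemeasurable,
      Measure.map_map hf (hX.prodMk hε)]
    rfl
  rw [hlaw, Measure.map_apply hf hs, Measure.prod_apply (hf hs)]
  rfl

lemma ae_map_apply_eq_zero (hind : IndepFun X ε P) (hX : Measurable X) (hε : Measurable ε)
    (hf : Measurable (Function.uncurry f)) (hs : MeasurableSet s)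
    (h : P.map (fun ω => f (X ω) (ε ω)) s = 0) :
    ∀ᵐ x ∂P.map X, P.map (fun ω => f x (ε ω)) s = 0 := by
  have hmeas : Measurable fun x => P.map ε (f x ⁻¹' s) := measurable_measure_prodMk_left (hf hs)
  rw [hind.map_apply_eq_lintegral hX hε hf hs, lintegral_eq_zero_iff hmeas] at h
  filter_upwards [h] with x (hx : P.map ε (f x ⁻¹' s) = 0)
  rw [← hx, Measure.map_apply hε (hf.of_uncurry_left hs)]
  exact Measure.map_apply (hf.of_uncurry_left.comp hε) hs

end ProbabilityTheory.IndepFun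

theorem stmt5_general {Ω F G : Type*} [mΩ : MeasurableSpace Ω]
    [MeasurableSpace F]
    [MeasurableSpace G] [AddCommGroup G] [MeasurableAdd₂ G]
    (P : Measure Ω) [IsProbabilityMeasure P]
    (X : Ω → F) (ε : Ω → G) (hX : Measurable X) (hε : Measurable ε)
    (hind : IndepFun X ε P)
    (L : F → G) (hL : Measurable L)
    (Y : Ω → G) (hY : Y = fun ω => L (X ω) + ε ω)
    (ν : Measure G) [SigmaFinite ν]
    (ρ : F → G → ℝ≥0∞) (hρ : Measurable (Function.uncurry ρ))
    (hdens : ∀ x, P.map (fun ω => ε ω + L x) = ν.withDensity (ρ x))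
    (hpos : ∀ᵐ p ∂((P.map X).prod ν), 0 < ρ p.1 p.2) :
    ∀ N : Set G, MeasurableSet N → P.map Y N = 0 →
      ∀ x₀ : F, P.map (fun ω => ε ω + L x₀) N = 0 := by
  intro N hN hYN x₀
  have hYε : Y = fun ω => ε ω + L (X ω) := by
    rw [hY]
    simp only [add_comm]
  rw [hYε] at hYN
  have hnull : ∀ᵐ x ∂P.map X, P.map (fun ω => ε ω + L x) N = 0 :=
    hind.ae_map_apply_eq_zero (f := fun x e => e + L x) hX hε
      (measurable_snd.add (hL.comp measurable_fst)) hN hYN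
  have : (ae (P.map X)).NeBot :=
    ae_neBot.2 (Measure.isProbabilityMeasure_map hX.aemeasurable).ne_zero
  obtain ⟨x, hx_null, hx_pos⟩ := (hnull.and (Measure.ae_ae_of_ae_prod hpos)).exists
  have hνN : ν N = 0 := by
    refine withDensity_absolutelyContinuous' (hρ.of_uncurry_left (x := x)).aemeasurable ?_ ?_
    · filter_upwards [hx_pos] with z hz using hz.ne'
    · rwa [← hdens x]
  rw [hdens x₀]
  exact withDensity_absolutelyContinuous ν (ρ x₀) hνN

/-- In the setting of the generalized Bayes formula, if moreover `μ_{ε+L(x)} ≪ ν` for all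
`x ∈ F` and the density `ρ` is positive `(μ_X × ν)`-a.e., then every Borel set `N ⊆ G` with
`μ_Y(N) = 0` satisfies `μ_{ε+L(x₀)}(N) = 0` for every `x₀ ∈ F`. -/
theorem stmt5 {Ω F G : Type*} [mΩ : MeasurableSpace Ω]
    [MeasurableSpace F] [StandardBorelSpace F]
    [MeasurableSpace G] [StandardBorelSpace G] [AddCommGroup G] [MeasurableAdd₂ G]
    (P : Measure Ω) [IsProbabilityMeasure P] (hP : P.IsComplete)
    (X : Ω → F) (ε : Ω → G) (hX : Measurable X) (hε : Measurable ε)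
    (hind : IndepFun X ε P)
    (L : F → G) (hL : Measurable L)
    (Y : Ω → G) (hY : Y = fun ω => L (X ω) + ε ω)
    (ν : Measure G) [SigmaFinite ν]
    (ρ : F → G → ℝ≥0∞) (hρ : Measurable (Function.uncurry ρ))
    (hdens : ∀ x, P.map (fun ω => ε ω + L x) = ν.withDensity (ρ x))
    (hpos : ∀ᵐ p ∂((P.map X).prod ν), 0 < ρ p.1 p.2) :
    ∀ N : Set G, MeasurableSet N → P.map Y N = 0 →
      ∀ x₀ : F, P.map (fun ω => ε ω + L x₀) N = 0 :=
  stmt5_general (mΩ := mΩ) P X ε hX hε hind L hL Y hY ν ρ hρ hdens hpos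
end

section
/- Let μ₁, μ₂ : 𝒢 → probability measures on (F,𝒻) be two regular conditional distributions of X given Y (both satisfying μᵢ(U,Y(ω)) = E[1_U(X)|σ(Y)](ω) a.s. for each Borel U, measurability in y, and countable additivity in U). Suppose A ⊆ G is contained in the topological support of μ_Y, with either A ⊆ closure(interior(A)) or μ_Y(A) = 1, and both y ↦ μ₁(U,y) and y ↦ μ₂(U,y) are continuous on A (in the relative topology) for all U in a measure-determining class 𝒻₀. Then μ₁(U,y) = μ₂(U,y) for all U ∈ 𝒻 and all y ∈ A. -/
/-!
Two regular versions of `P[1_U(X) | Y]` agree `μ_Y`-almost surely, so for each `U ∈ 𝓕₀` the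
functions `y ↦ μ₁(U, y)` and `y ↦ μ₂(U, y)` agree off a `μ_Y`-null set. Both are continuous on `A`,
so if they differed at `y ∈ A` they would differ on a relative neighbourhood `V ∩ A` of `y`; since
`y` lies in the support of `μ_Y`, either hypothesis on `A` forces such a set to have positive
`μ_Y`-measure. Hence `μ₁(·, y)` and `μ₂(·, y)` agree on `𝓕₀`, and therefore everywhere.
-/

open MeasureTheory ProbabilityTheory Filter Topology Set

section SupportAndContinuity

variable {G β : Type*} [TopologicalSpace G] [MeasurableSpace G] {ν : Measure G} {A : Set G}

lemma measure_pos_of_mem_nhdsWithin [OpensMeasurableSpace G] [IsProbabilityMeasure ν]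
    (hA_supp : A ⊆ ν.support) (hA : A ⊆ closure (interior A) ∨ ν A = 1)
    {y : G} (hy : y ∈ A) {S : Set G} (hS : S ∈ 𝓝[A] y) : 0 < ν S := by
  obtain ⟨V, hV, hyV, hVS⟩ := mem_nhdsWithin.mp hS
  rcases hA with hA | hA
  · obtain ⟨w, hwV, hwA⟩ := mem_closure_iff.mp (hA hy) V hV hyV
    calc 0 < ν (V ∩ interior A) := (Measure.mem_support_iff_forall w).mp
            (hA_supp (interior_subset hwA)) _ ((hV.inter isOpen_interior).mem_nhds ⟨hwV, hwA⟩)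
      _ ≤ ν S := measure_mono fun z hz => hVS ⟨hz.1, interior_subset hz.2⟩
  · refine (pos_iff_ne_zero.mpr fun h0 => ?_).trans_le (measure_mono hVS)
    -- `A` need not be measurable, so `ν (V ∩ A) = 0` is played against `ν A = 1` by subadditivity.
    have hVc : 1 ≤ ν Vᶜ :=
      calc 1 = ν A := hA.symm
        _ ≤ ν (V ∩ A) + ν Vᶜ :=
          (measure_mono fun z hz => (em (z ∈ V)).imp (⟨·, hz⟩) id).trans (measure_union_le _ _)
        _ = ν Vᶜ := by rw [h0, zero_add]
    exact ((Measure.mem_support_iff_forall y).mp (hA_supp hy) V (hV.mem_nhds hyV)).ne' <|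
      (prob_compl_eq_one_iff hV.measurableSet).mp (le_antisymm prob_le_one hVc)

lemma eqOn_of_ae_eq_of_continuousOn [OpensMeasurableSpace G] [IsProbabilityMeasure ν]
    [TopologicalSpace β] [T2Space β] {f g : G → β}
    (hA_supp : A ⊆ ν.support) (hA : A ⊆ closure (interior A) ∨ ν A = 1)
    (hfg : f =ᵐ[ν] g) (hf : ContinuousOn f A) (hg : ContinuousOn g A) : EqOn f g A := by
  intro y hy
  by_contra hne
  have hne_nhds : {z | f z ≠ g z} ∈ 𝓝[A] y :=
    ((hf y hy).prodMk (hg y hy)).eventually (isClosed_diagonal.isOpen_compl.mem_nhds hne)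
  exact (measure_pos_of_mem_nhdsWithin hA_supp hA hy hne_nhds).ne' (ae_iff.mp hfg)

end SupportAndContinuity

lemma ae_eq_map_of_comp_ae_eq {Ω G β : Type*} [MeasurableSpace Ω] [MeasurableSpace G]
    [MeasurableSpace β] [MeasurableEq β] {P : Measure Ω} {Y : Ω → G} {f g : G → β}
    (hY : AEMeasurable Y P) (hf : AEMeasurable f (P.map Y)) (hg : AEMeasurable g (P.map Y))
    (h : f ∘ Y =ᵐ[P] g ∘ Y) : f =ᵐ[P.map Y] g :=
  ae_iff.mpr <|
    (Measure.map_apply₀ hY (nullMeasurableSet_eq_fun hf hg).compl).trans (ae_iff.mp h)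

theorem stmt7_general {Ω F G : Type*} [mΩ : MeasurableSpace Ω]
    [MeasurableSpace F]
    [TopologicalSpace G] [MeasurableSpace G] [BorelSpace G]
    (P : Measure Ω) [IsProbabilityMeasure P]
    (X : Ω → F) (Y : Ω → G) (hY : Measurable Y)
    (μ1 μ2 : G → Measure F)
    (h1prob : ∀ y, IsProbabilityMeasure (μ1 y)) (h2prob : ∀ y, IsProbabilityMeasure (μ2 y))
    (h1meas : ∀ U : Set F, MeasurableSet U →
      AEMeasurable (fun y => (μ1 y U).toReal) (P.map Y))
    (h2meas : ∀ U : Set F, MeasurableSet U →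
      AEMeasurable (fun y => (μ2 y U).toReal) (P.map Y))
    (h1cond : ∀ U : Set F, MeasurableSet U →
      (fun ω => (μ1 (Y ω) U).toReal) =ᵐ[P]
        P[fun ω => Set.indicator U (fun _ => (1 : ℝ)) (X ω)|
          MeasurableSpace.comap Y inferInstance])
    (h2cond : ∀ U : Set F, MeasurableSet U →
      (fun ω => (μ2 (Y ω) U).toReal) =ᵐ[P]
        P[fun ω => Set.indicator U (fun _ => (1 : ℝ)) (X ω)|
          MeasurableSpace.comap Y inferInstance])
    (F0 : Set (Set F)) (hF0meas : ∀ U ∈ F0, MeasurableSet U)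
    (hdet : ∀ m1 m2 : Measure F, IsProbabilityMeasure m1 → IsProbabilityMeasure m2 →
      (∀ U ∈ F0, m1 U = m2 U) → m1 = m2)
    (A : Set G)
    (hsupp : ∀ y ∈ A, ∀ V : Set G, IsOpen V → y ∈ V → 0 < P.map Y V)
    (hA : A ⊆ closure (interior A) ∨ P.map Y A = 1)
    (h1cont : ∀ U ∈ F0, ContinuousOn (fun y => (μ1 y U).toReal) A)
    (h2cont : ∀ U ∈ F0, ContinuousOn (fun y => (μ2 y U).toReal) A) :
    ∀ y ∈ A, μ1 y = μ2 y := by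
  have := Measure.isProbabilityMeasure_map (μ := P) hY.aemeasurable
  have hA_supp : A ⊆ (P.map Y).support := fun y hy => by
    rw [Measure.support_eq_forall_isOpen]
    exact fun V hyV hV => hsupp y hy V hV hyV
  intro y hy
  refine hdet _ _ (h1prob y) (h2prob y) fun U hU => ?_
  have hUm := hF0meas U hU
  have hae : (fun y => (μ1 y U).toReal) =ᵐ[P.map Y] fun y => (μ2 y U).toReal :=
    ae_eq_map_of_comp_ae_eq hY.aemeasurable (h1meas U hUm) (h2meas U hUm)
      ((h1cond U hUm).trans (h2cond U hUm).symm)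
  have hUy := eqOn_of_ae_eq_of_continuousOn hA_supp hA hae (h1cont U hU) (h2cont U hU) hy
  have := h1prob y
  have := h2prob y
  exact (ENNReal.toReal_eq_toReal_iff' (measure_ne_top _ _) (measure_ne_top _ _)).mp hUy

/-- Partial uniqueness of posterior distributions: if `μ₁, μ₂` are two regular conditional
distributions of `X` given `Y`, `A` is a subset of the topological support of `μ_Y` with
`A ⊆ closure (interior A)` or `μ_Y A = 1`, and both are continuous on `A` (in the relative
topology) on a measure-determining class `𝒻₀`, then they coincide on `A`. -/
theorem stmt7 {Ω F G : Type*} [mΩ : MeasurableSpace Ω]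
    [TopologicalSpace F] [MeasurableSpace F] [BorelSpace F] [PolishSpace F]
    [TopologicalSpace G] [MeasurableSpace G] [BorelSpace G] [PolishSpace G]
    (P : Measure Ω) [IsProbabilityMeasure P] (hP : P.IsComplete)
    (X : Ω → F) (Y : Ω → G) (hX : Measurable X) (hY : Measurable Y)
    (μ1 μ2 : G → Measure F)
    (h1prob : ∀ y, IsProbabilityMeasure (μ1 y)) (h2prob : ∀ y, IsProbabilityMeasure (μ2 y))
    (h1meas : ∀ U : Set F, MeasurableSet U →
      AEMeasurable (fun y => (μ1 y U).toReal) (P.map Y))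
    (h2meas : ∀ U : Set F, MeasurableSet U →
      AEMeasurable (fun y => (μ2 y U).toReal) (P.map Y))
    (h1cond : ∀ U : Set F, MeasurableSet U →
      (fun ω => (μ1 (Y ω) U).toReal) =ᵐ[P]
        P[fun ω => Set.indicator U (fun _ => (1 : ℝ)) (X ω)|
          MeasurableSpace.comap Y inferInstance])
    (h2cond : ∀ U : Set F, MeasurableSet U →
      (fun ω => (μ2 (Y ω) U).toReal) =ᵐ[P]
        P[fun ω => Set.indicator U (fun _ => (1 : ℝ)) (X ω)|
          MeasurableSpace.comap Y inferInstance])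
    (F0 : Set (Set F)) (hF0meas : ∀ U ∈ F0, MeasurableSet U)
    (hdet : ∀ m1 m2 : Measure F, IsProbabilityMeasure m1 → IsProbabilityMeasure m2 →
      (∀ U ∈ F0, m1 U = m2 U) → m1 = m2)
    (A : Set G)
    (hsupp : ∀ y ∈ A, ∀ V : Set G, IsOpen V → y ∈ V → 0 < P.map Y V)
    (hA : A ⊆ closure (interior A) ∨ P.map Y A = 1)
    (h1cont : ∀ U ∈ F0, ContinuousOn (fun y => (μ1 y U).toReal) A)
    (h2cont : ∀ U ∈ F0, ContinuousOn (fun y => (μ2 y U).toReal) A) :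
    ∀ y ∈ A, μ1 y = μ2 y :=
  stmt7_general (mΩ := mΩ) P X Y hY μ1 μ2 h1prob h2prob h1meas h2meas h1cond h2cond F0 hF0meas hdet
    A hsupp hA h1cont h2cont
end

section
/- Let Y = L(X) + ε with X and ε independent and L : F → G Borel measurable. Then the topological support of μ_Y is the smallest closed set S ⊆ G such that μ_{ε+L(x)}(S) = 1 for μ_X-almost every x. Moreover, if μ_{ε+L(x)} is equivalent to a fixed probability measure ν for every x ∈ F, then the topological supports of μ_Y and ν coincide. -/
open MeasureTheory ProbabilityTheory Filter

/-! By independence the law of `(X, ε)` is `μ_X ⊗ μ_ε`, so by Fubini `L(X) + ε` lies in a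
measurable set `C` almost surely iff `ε + L(x)` does for `μ_X`-almost every `x`. Hence the closed
sets of full `μ_Y`-measure are exactly those of `μ_X`-a.e. full `μ_{ε+L(x)}`-measure and, when
every `μ_{ε+L(x)}` is equivalent to `ν`, exactly those of full `ν`-measure. In a second countable
space the support of `μ_Y` is the least closed set of full `μ_Y`-measure, hence the least one for
all three descriptions. -/

namespace MeasureTheory.Measure

variable {X : Type*} [MeasurableSpace X] {μ ν : Measure X} {s : Set X}

lemma AbsolutelyContinuous.prob_eq_one [IsProbabilityMeasure μ] [IsProbabilityMeasure ν]
    (h : μ ≪ ν) (hs : MeasurableSet s) (hνs : ν s = 1) : μ s = 1 := by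
  rw [← mem_ae_iff_prob_eq_one hs] at hνs ⊢
  exact h.ae_le hνs

variable [TopologicalSpace X]

lemma support_subset_iff_mem_ae [HereditarilyLindelofSpace X] (hs : IsClosed s) :
    μ.support ⊆ s ↔ s ∈ ae μ :=
  ⟨mem_of_superset support_mem_ae, support_subset_of_isClosed hs⟩

lemma support_subset_iff_prob_eq_one [HereditarilyLindelofSpace X] [OpensMeasurableSpace X]
    [IsProbabilityMeasure μ] (hs : IsClosed s) : μ.support ⊆ s ↔ μ s = 1 :=
  (support_subset_iff_mem_ae hs).trans (mem_ae_iff_prob_eq_one hs.measurableSet)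

end MeasureTheory.Measure

namespace ProbabilityTheory.IndepFun

variable {Ω F E : Type*} [MeasurableSpace Ω] [MeasurableSpace F] [MeasurableSpace E]
  {P : Measure Ω} [IsFiniteMeasure P] {X : Ω → F} {ε : Ω → E}

theorem ae_iff_ae_ae (hind : IndepFun X ε P) (hX : Measurable X) (hε : Measurable ε)
    {p : F → E → Prop} (hp : MeasurableSet {z : F × E | p z.1 z.2}) :
    (∀ᵐ ω ∂P, p (X ω) (ε ω)) ↔ ∀ᵐ x ∂P.map X, ∀ᵐ ω ∂P, p x (ε ω) :=
  calc (∀ᵐ ω ∂P, p (X ω) (ε ω))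
      ↔ ∀ᵐ z ∂P.map (fun ω => (X ω, ε ω)), p z.1 z.2 :=
        (ae_map_iff (hX.prodMk hε).aemeasurable hp).symm
    _ ↔ ∀ᵐ z ∂(P.map X).prod (P.map ε), p z.1 z.2 := by
        rw [hind.map_prod_eq_prod_map_map hX.aemeasurable hε.aemeasurable]
    _ ↔ ∀ᵐ x ∂P.map X, ∀ᵐ e ∂P.map ε, p x e := Measure.ae_prod_iff_ae_ae hp
    _ ↔ ∀ᵐ x ∂P.map X, ∀ᵐ ω ∂P, p x (ε ω) := eventually_congr <| .of_forall fun _ =>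
        ae_map_iff hε.aemeasurable (measurable_prodMk_left hp)

theorem map_add_prob_eq_one_iff {G : Type*} [AddCommMagma G] [MeasurableSpace G]
    [MeasurableAdd₂ G] [IsProbabilityMeasure P] {ε : Ω → G} (hind : IndepFun X ε P)
    (hX : Measurable X) (hε : Measurable ε) {L : F → G} (hL : Measurable L) {C : Set G}
    (hC : MeasurableSet C) :
    P.map (fun ω => L (X ω) + ε ω) C = 1 ↔
      ∀ᵐ x ∂P.map X, P.map (fun ω => ε ω + L x) C = 1 := by
  have hY : Measurable fun ω => L (X ω) + ε ω := by fun_prop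
  have hεx : ∀ x, Measurable fun ω => ε ω + L x := fun x => by fun_prop
  have := Measure.isProbabilityMeasure_map (μ := P) hY.aemeasurable
  rw [← mem_ae_iff_prob_eq_one hC, mem_ae_map_iff hY.aemeasurable hC]
  refine (hind.ae_iff_ae_ae hX hε (p := fun x e => L x + e ∈ C)
    ((hL.comp measurable_fst).add measurable_snd hC)).trans <|
    eventually_congr <| .of_forall fun x => ?_
  have := Measure.isProbabilityMeasure_map (μ := P) (hεx x).aemeasurable
  rw [← mem_ae_iff_prob_eq_one hC, mem_ae_map_iff (hεx x).aemeasurable hC]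
  simp_rw [add_comm (L x)]
  rfl

end ProbabilityTheory.IndepFun

theorem stmt10_general {Ω F G : Type*} [mΩ : MeasurableSpace Ω]
    [MeasurableSpace F]
    [TopologicalSpace G] [SecondCountableTopology G] [MeasurableSpace G] [BorelSpace G]
    [AddCommGroup G] [IsTopologicalAddGroup G]
    (P : Measure Ω) [IsProbabilityMeasure P]
    (X : Ω → F) (ε : Ω → G) (hX : Measurable X) (hε : Measurable ε)
    (hind : IndepFun X ε P)
    (L : F → G) (hL : Measurable L)
    (Y : Ω → G) (hY : Y = fun ω => L (X ω) + ε ω) :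
    ∃ S : Set G, IsClosed S ∧
      P.map Y S = 1 ∧ (∀ C : Set G, IsClosed C → P.map Y C = 1 → S ⊆ C) ∧
      (∀ᵐ x ∂(P.map X), P.map (fun ω => ε ω + L x) S = 1) ∧
      (∀ C : Set G, IsClosed C →
        (∀ᵐ x ∂(P.map X), P.map (fun ω => ε ω + L x) C = 1) → S ⊆ C) ∧
      (∀ ν : Measure G, IsProbabilityMeasure ν →
        (∀ x, P.map (fun ω => ε ω + L x) ≪ ν ∧ ν ≪ P.map (fun ω => ε ω + L x)) →
        ν S = 1 ∧ ∀ C : Set G, IsClosed C → ν C = 1 → S ⊆ C) := by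
  subst hY
  set μY := P.map fun ω => L (X ω) + ε ω
  have : IsProbabilityMeasure μY := Measure.isProbabilityMeasure_map (by fun_prop)
  have := Measure.isProbabilityMeasure_map (μ := P) hX.aemeasurable
  have := fun x => Measure.isProbabilityMeasure_map (μ := P) (hε.add_const (L x)).aemeasurable
  set S := μY.support
  have hS : ∀ C, IsClosed C → (S ⊆ C ↔ μY C = 1) :=
    fun C hC => Measure.support_subset_iff_prob_eq_one hC
  have hmix : ∀ C, IsClosed C →
      (μY C = 1 ↔ ∀ᵐ x ∂P.map X, P.map (fun ω => ε ω + L x) C = 1) :=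
    fun C hC => hind.map_add_prob_eq_one_iff hX hε hL hC.measurableSet
  have hSY : μY S = 1 := (hS S Measure.isClosed_support).1 subset_rfl
  refine ⟨S, Measure.isClosed_support, hSY, fun C hC => (hS C hC).2,
    (hmix S Measure.isClosed_support).1 hSY, fun C hC h => (hS C hC).2 ((hmix C hC).2 h),
    fun ν _ hequiv => ?_⟩
  have hν : ∀ C, IsClosed C → (μY C = 1 ↔ ν C = 1) := fun C hC => by
    rw [hmix C hC]
    exact (eventually_congr (.of_forall fun x => ⟨(hequiv x).2.prob_eq_one hC.measurableSet,
      (hequiv x).1.prob_eq_one hC.measurableSet⟩)).trans eventually_const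
  exact ⟨(hν S Measure.isClosed_support).1 hSY, fun C hC h => (hS C hC).2 ((hν C hC).2 h)⟩

/-- For `Y = L(X) + ε` with `X` and `ε` independent, the topological support of `μ_Y` is the
smallest closed set `S` with `μ_{ε+L(x)}(S) = 1` for `μ_X`-a.e. `x`; moreover, if each
`μ_{ε+L(x)}` is equivalent to a fixed probability measure `ν`, then `S` is also the topological
support of `ν` (i.e. the supports of `μ_Y` and `ν` coincide). -/
theorem stmt10 {Ω F G : Type*} [mΩ : MeasurableSpace Ω]
    [MeasurableSpace F] [StandardBorelSpace F]
    [TopologicalSpace G] [SecondCountableTopology G] [MeasurableSpace G] [BorelSpace G]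
    [AddCommGroup G] [IsTopologicalAddGroup G]
    (P : Measure Ω) [IsProbabilityMeasure P]
    (X : Ω → F) (ε : Ω → G) (hX : Measurable X) (hε : Measurable ε)
    (hind : IndepFun X ε P)
    (L : F → G) (hL : Measurable L)
    (Y : Ω → G) (hY : Y = fun ω => L (X ω) + ε ω) :
    ∃ S : Set G, IsClosed S ∧
      P.map Y S = 1 ∧ (∀ C : Set G, IsClosed C → P.map Y C = 1 → S ⊆ C) ∧
      (∀ᵐ x ∂(P.map X), P.map (fun ω => ε ω + L x) S = 1) ∧
      (∀ C : Set G, IsClosed C →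
        (∀ᵐ x ∂(P.map X), P.map (fun ω => ε ω + L x) C = 1) → S ⊆ C) ∧
      (∀ ν : Measure G, IsProbabilityMeasure ν →
        (∀ x, P.map (fun ω => ε ω + L x) ≪ ν ∧ ν ≪ P.map (fun ω => ε ω + L x)) →
        ν S = 1 ∧ ∀ C : Set G, IsClosed C → ν C = 1 → S ⊆ C) :=
  stmt10_general (mΩ := mΩ) P X ε hX hε hind L hL Y hY
end

section
/- (Weak posterior convergence) Under Assumption A, fix y with 0 < ∫ ρ(x,y) dμ_X(x) < ∞ and 0 < ∫ ρ(x,y) dμ_{X_n}(x) < ∞ for all n, suppose the discontinuities of x ↦ ρ(x,y) lie in a μ_X-null set, and suppose lim_{C→∞} sup_n ∫_{{ρ(·,y)>C}} ρ(x,y) dμ_{X_n}(x) = 0. If μ_{X_n} converges weakly to μ_X, then the posterior distributions μ_n(·,y) = (∫_· ρ(x,y) dμ_{X_n}(x)) / (∫_F ρ(x,y) dμ_{X_n}(x)) converge weakly to μ(·,y) = (∫_· ρ(x,y) dμ_X(x)) / (∫_F ρ(x,y) dμ_X(x)). -/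
/-!
Since the posterior integrals are the ratios `∫ f ρ dμₙ / ∫ ρ dμₙ`, it suffices to show
`∫ f ρ dμₙ → ∫ f ρ dμ` for every bounded continuous `f`. Truncating `ρ` at a level `C` gives a
bounded function that is continuous `μ`-a.e.; its integrals converge by the portmanteau theorem,
applied through the layer-cake formula to the superlevel sets, almost all of which have
`μ`-null frontier. The uniform tail bound makes the truncation error small uniformly in `n`,
dominated convergence makes it small for `μ`, and the two limits can then be interchanged.
-/

open MeasureTheory ProbabilityTheory Filter Topology
open scoped BoundedContinuousFunction

lemma eq_of_mem_frontier_setOf_lt_of_continuousAt {E : Type*} [TopologicalSpace E]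
    {g : E → ℝ} {t : ℝ} {x : E} (hx : x ∈ frontier {y | t < g y}) (hg : ContinuousAt g x) :
    g x = t := by
  refine le_antisymm (not_lt.1 fun h => hx.2 (mem_interior_iff_mem_nhds.2 (hg.eventually
    (eventually_gt_nhds h)))) (not_lt.1 fun h => ?_)
  obtain ⟨y, hty, hyt⟩ := ((mem_closure_iff_frequently.1 hx.1).and_eventually
    (hg.eventually (eventually_lt_nhds h))).exists
  exact lt_asymm hty hyt

lemma abs_integral_mul_sub_integral_mul_min_le {E : Type*} [TopologicalSpace E]
    [MeasurableSpace E] [OpensMeasurableSpace E] {κ : Measure E} (f : E →ᵇ ℝ) {ρ : E → ℝ}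
    (hρ : Measurable ρ) (hρ_nonneg : 0 ≤ ρ) (hρκ : Integrable ρ κ) {C : ℝ} (hC : 0 ≤ C) :
    |∫ x, f x * ρ x ∂κ - ∫ x, f x * min (ρ x) C ∂κ| ≤ ‖f‖ * ∫ x in {x | C < ρ x}, ρ x ∂κ := by
  have hf_bound : ∀ᵐ x ∂κ, ‖f x‖ ≤ ‖f‖ := .of_forall f.norm_coe_le_norm
  have hmin : Integrable (fun x => min (ρ x) C) κ :=
    hρκ.mono' (hρ.min measurable_const).aestronglyMeasurable (.of_forall fun x => by
      rw [Real.norm_of_nonneg (le_min (hρ_nonneg x) hC)]; exact min_le_left _ _)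
  have hexcess (x : E) : ρ x - min (ρ x) C ≤ {x | C < ρ x}.indicator ρ x := by
    by_cases hx : x ∈ {x | C < ρ x}
    · rw [Set.indicator_of_mem hx, min_eq_right (le_of_lt hx)]; linarith
    · rw [Set.indicator_of_notMem hx, min_eq_left (not_lt.1 hx), sub_self]
  have hS : MeasurableSet {x | C < ρ x} := measurableSet_lt measurable_const hρ
  rw [← integral_sub (hρκ.bdd_mul f.continuous.aestronglyMeasurable hf_bound)
    (hmin.bdd_mul f.continuous.aestronglyMeasurable hf_bound), ← Real.norm_eq_abs,
    ← integral_indicator hS, ← integral_const_mul]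
  refine norm_integral_le_of_norm_le ((hρκ.indicator hS).const_mul _) (.of_forall fun x => ?_)
  rw [← mul_sub, norm_mul, Real.norm_of_nonneg (sub_nonneg.2 (min_le_left _ _))]
  exact mul_le_mul (f.norm_coe_le_norm x) (hexcess x) (sub_nonneg.2 (min_le_left _ _))
    (norm_nonneg f)

namespace MeasureTheory.ProbabilityMeasure

variable {E ι : Type*} [TopologicalSpace E] [MeasurableSpace E] [OpensMeasurableSpace E]
  [HasOuterApproxClosed E] {L : Filter ι}
  {μ : ProbabilityMeasure E} {μs : ι → ProbabilityMeasure E}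

theorem tendsto_measure_setOf_lt_of_ae_continuousAt (hμs : Tendsto μs L (𝓝 μ))
    {g : E → ℝ} (hg_cont : ∀ᵐ x ∂(μ : Measure E), ContinuousAt g x) {t : ℝ}
    (ht : (μ : Measure E) {x | g x = t} = 0) :
    Tendsto (fun i => (μs i : Measure E) {x | t < g x}) L
      (𝓝 ((μ : Measure E) {x | t < g x})) := by
  refine tendsto_measure_of_null_frontier_of_tendsto' hμs (measure_mono_null ?_
    (measure_union_null (ae_iff.1 hg_cont) ht))
  intro x hx
  by_cases hxc : ContinuousAt g x
  · exact Or.inr (eq_of_mem_frontier_setOf_lt_of_continuousAt hx hxc)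
  · exact Or.inl hxc

theorem tendsto_integral_of_nonneg_of_ae_continuousAt [L.IsCountablyGenerated]
    (hμs : Tendsto μs L (𝓝 μ))
    {g : E → ℝ} (hg : Measurable g) (hg_cont : ∀ᵐ x ∂(μ : Measure E), ContinuousAt g x)
    (hg_nonneg : 0 ≤ g) {M : ℝ} (hgM : ∀ x, g x ≤ M) :
    Tendsto (fun i => ∫ x, g x ∂(μs i : Measure E)) L (𝓝 (∫ x, g x ∂(μ : Measure E))) := by
  have hint (ν : ProbabilityMeasure E) : Integrable g ν :=
    (integrable_const M).mono' hg.aestronglyMeasurable (.of_forall fun x => by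
      rw [Real.norm_of_nonneg (hg_nonneg x)]; exact hgM x)
  have hlayer (ν : ProbabilityMeasure E) :
      ∫ x, g x ∂(ν : Measure E) = ∫ t in Set.Ioi 0, (ν : Measure E).real {x | t < g x} :=
    (hint ν).integral_eq_integral_meas_lt (.of_forall hg_nonneg)
  simp only [hlayer]
  have hlevel :
      ∀ᵐ t ∂(volume.restrict (Set.Ioi (0 : ℝ))), (μ : Measure E) {x | g x = t} = 0 :=
    measure_mono_null (fun t ht => pos_iff_ne_zero.2 ht)
      ((Measure.countable_meas_level_set_pos (μ := (μ : Measure E)) hg).measure_zero _)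
  refine tendsto_integral_filter_of_dominated_convergence ((Set.Ioc 0 M).indicator fun _ => 1)
    (.of_forall fun i => ?_) (.of_forall fun i => ?_) ?_ ?_
  · exact (Antitone.measurable (f := fun t => (μs i : Measure E) {x | t < g x})
      fun s t hst => measure_mono fun x hx => hst.trans_lt hx)
      |>.ennreal_toReal.aestronglyMeasurable
  · filter_upwards [ae_restrict_mem measurableSet_Ioi] with t ht
    rw [Real.norm_of_nonneg measureReal_nonneg]
    by_cases htM : t ≤ M
    · rw [Set.indicator_of_mem (show t ∈ Set.Ioc 0 M from ⟨ht, htM⟩)]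
      exact measureReal_le_one
    · have : {x | t < g x} = ∅ := Set.eq_empty_of_forall_notMem fun x hx =>
        htM ((le_of_lt hx).trans (hgM x))
      simpa [this] using Set.indicator_nonneg (fun _ _ => zero_le_one) t
  · exact (integrable_indicator_iff measurableSet_Ioc).2 (integrableOn_const (by simp))
  · filter_upwards [hlevel] with t ht
    exact (ENNReal.tendsto_toReal (measure_ne_top _ _)).comp
      (tendsto_measure_setOf_lt_of_ae_continuousAt hμs hg_cont ht)

theorem tendsto_integral_of_ae_continuousAt [L.IsCountablyGenerated]
    (hμs : Tendsto μs L (𝓝 μ))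
    {g : E → ℝ} (hg : Measurable g) (hg_cont : ∀ᵐ x ∂(μ : Measure E), ContinuousAt g x)
    {M : ℝ} (hgM : ∀ x, |g x| ≤ M) :
    Tendsto (fun i => ∫ x, g x ∂(μs i : Measure E)) L (𝓝 (∫ x, g x ∂(μ : Measure E))) := by
  have hshift := tendsto_integral_of_nonneg_of_ae_continuousAt hμs (hg.add_const M)
    (hg_cont.mono fun x hx => hx.add continuousAt_const)
    (fun x => show 0 ≤ g x + M by linarith [(abs_le.1 (hgM x)).1])
    (fun x => show g x + M ≤ M + M by linarith [(abs_le.1 (hgM x)).2])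
  have hint (ν : ProbabilityMeasure E) : Integrable g ν :=
    (integrable_const M).mono' hg.aestronglyMeasurable (.of_forall hgM)
  have hadd (ν : ProbabilityMeasure E) :
      ∫ x, g x + M ∂(ν : Measure E) = ∫ x, g x ∂(ν : Measure E) + M := by
    rw [integral_add (hint ν) (integrable_const M), integral_const, probReal_univ, one_smul]
  simpa only [hadd, add_sub_cancel_right] using hshift.sub_const M

theorem tendsto_integral_mul_of_ae_continuousAt [L.IsCountablyGenerated]
    (hμs : Tendsto μs L (𝓝 μ)) {ρ : E → ℝ} (hρ : Measurable ρ) (hρ_nonneg : 0 ≤ ρ)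
    (hρ_cont : ∀ᵐ x ∂(μ : Measure E), ContinuousAt ρ x)
    (hρμ : Integrable ρ μ) (hρμs : ∀ i, Integrable ρ (μs i))
    (hρ_tail : ∀ δ > 0, ∃ C : ℝ, ∀ i, ∫ x in {x | C < ρ x}, ρ x ∂(μs i : Measure E) < δ)
    (f : E →ᵇ ℝ) :
    Tendsto (fun i => ∫ x, f x * ρ x ∂(μs i : Measure E)) L
      (𝓝 (∫ x, f x * ρ x ∂(μ : Measure E))) := by
  set trunc : ℝ → ι → ℝ := fun C i => ∫ x, f x * min (ρ x) C ∂(μs i : Measure E)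
  have htrunc_meas (C : ℝ) : Measurable fun x => f x * min (ρ x) C :=
    f.continuous.measurable.mul (hρ.min measurable_const)
  have htrunc_le {C : ℝ} (hC : 0 ≤ C) (x : E) : |f x * min (ρ x) C| ≤ ‖f‖ * min (ρ x) C := by
    rw [abs_mul, abs_of_nonneg (le_min (hρ_nonneg x) hC)]
    exact mul_le_mul_of_nonneg_right (f.norm_coe_le_norm x) (le_min (hρ_nonneg x) hC)
  have htrunc_unif :
      TendstoUniformly trunc (fun i => ∫ x, f x * ρ x ∂(μs i : Measure E)) atTop := by
    rw [Metric.tendstoUniformly_iff]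
    intro ε hε
    obtain ⟨C₀, hC₀⟩ := hρ_tail (ε / (‖f‖ + 1)) (by positivity)
    filter_upwards [eventually_ge_atTop (max C₀ 0)] with C hC i
    rw [Real.dist_eq]
    calc _ ≤ ‖f‖ * ∫ x in {x | C < ρ x}, ρ x ∂(μs i : Measure E) :=
          abs_integral_mul_sub_integral_mul_min_le f hρ hρ_nonneg (hρμs i)
            ((le_max_right _ _).trans hC)
      _ ≤ ‖f‖ * (ε / (‖f‖ + 1)) := by
          gcongr
          exact (setIntegral_mono_set (hρμs i).integrableOn (.of_forall hρ_nonneg)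
            (.of_forall fun x hx => ((le_max_left _ _).trans hC).trans_lt hx)).trans (hC₀ i).le
      _ < ε := by
          rw [← mul_div_assoc, div_lt_iff₀ (by positivity)]
          nlinarith
  have htrunc_tendsto (C : ℝ) (hC : 0 ≤ C) :
      Tendsto (trunc C) L (𝓝 (∫ x, f x * min (ρ x) C ∂(μ : Measure E))) :=
    tendsto_integral_of_ae_continuousAt hμs (htrunc_meas C)
      (hρ_cont.mono fun x hx => f.continuous.continuousAt.mul (hx.min continuousAt_const))
      fun x => (htrunc_le hC x).trans
        (mul_le_mul_of_nonneg_left (min_le_right _ _) (norm_nonneg f))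
  have htrunc_limit : Tendsto (fun C => ∫ x, f x * min (ρ x) C ∂(μ : Measure E)) atTop
      (𝓝 (∫ x, f x * ρ x ∂(μ : Measure E))) := by
    refine tendsto_integral_filter_of_dominated_convergence (fun x => ‖f‖ * ρ x)
      (.of_forall fun C => (htrunc_meas C).aestronglyMeasurable)
      ((eventually_ge_atTop 0).mono fun C hC => .of_forall fun x => ?_) (hρμ.const_mul _)
      (.of_forall fun x => ?_)
    · exact (htrunc_le hC x).trans (mul_le_mul_of_nonneg_left (min_le_left _ _) (norm_nonneg f))
    · refine (tendsto_const_nhds.congr' ?_).const_mul (f x)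
      filter_upwards [eventually_ge_atTop (ρ x)] with C hC
      rw [min_eq_left hC]
  exact htrunc_unif.tendsto_of_eventually_tendsto
    ((eventually_ge_atTop 0).mono htrunc_tendsto) htrunc_limit

end MeasureTheory.ProbabilityMeasure

theorem stmt12_general {Ω F G : Type*} [mΩ : MeasurableSpace Ω]
    [TopologicalSpace F] [PolishSpace F] [MeasurableSpace F] [BorelSpace F]
    [MeasurableSpace G]
    (P : Measure Ω) [IsProbabilityMeasure P]
    (X : Ω → F) (Xn : ℕ → Ω → F)
    (hX : Measurable X) (hXn : ∀ n, Measurable (Xn n))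
    (ρ : F → G → ℝ) (hρmeas : Measurable (Function.uncurry ρ)) (hρnn : ∀ x z, 0 ≤ ρ x z)
    (y : G)
    (hX0 : 0 < ∫ x, ρ x y ∂(P.map X)) (hXint : Integrable (fun x => ρ x y) (P.map X))
    (hXnint : ∀ n, Integrable (fun x => ρ x y) (P.map (Xn n)))
    (Nd : Set F) (hNd : P.map X Nd = 0)
    (hdisc : {x | ¬ ContinuousAt (fun x => ρ x y) x} ⊆ Nd)
    (hui : ∀ δ : ℝ, 0 < δ → ∃ C : ℝ, ∀ n,
      ∫ x in {x | C < ρ x y}, ρ x y ∂(P.map (Xn n)) < δ)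
    (hweak : ∀ g : BoundedContinuousFunction F ℝ,
      Tendsto (fun n => ∫ x, g x ∂(P.map (Xn n))) atTop (𝓝 (∫ x, g x ∂(P.map X)))) :
    ∀ f : BoundedContinuousFunction F ℝ,
      Tendsto (fun n =>
          (∫ x, f x * ρ x y ∂(P.map (Xn n))) / ∫ x, ρ x y ∂(P.map (Xn n)))
        atTop
        (𝓝 ((∫ x, f x * ρ x y ∂(P.map X)) / ∫ x, ρ x y ∂(P.map X))) := by
  intro f
  let μ : ProbabilityMeasure F := ⟨P.map X, Measure.isProbabilityMeasure_map hX.aemeasurable⟩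
  let μs (n : ℕ) : ProbabilityMeasure F :=
    ⟨P.map (Xn n), Measure.isProbabilityMeasure_map (hXn n).aemeasurable⟩
  have hμs : Tendsto μs atTop (𝓝 μ) :=
    ProbabilityMeasure.tendsto_iff_forall_integral_tendsto.2 hweak
  have hρy : Measurable fun x => ρ x y := hρmeas.comp (measurable_id.prodMk measurable_const)
  have hρy_cont : ∀ᵐ x ∂(P.map X), ContinuousAt (fun x => ρ x y) x :=
    ae_iff.2 (measure_mono_null hdisc hNd)
  have hlim := ProbabilityMeasure.tendsto_integral_mul_of_ae_continuousAt hμs hρy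
    (fun x => hρnn x y) hρy_cont hXint hXnint hui
  have hnorm := hlim 1
  simp only [BoundedContinuousFunction.coe_one, Pi.one_apply, one_mul] at hnorm
  exact (hlim f).div hnorm hX0.ne'

/-- Weak posterior convergence: under Assumption A, for a fixed observation `y` with finite
nonzero normalizing integrals, if the discontinuities of `x ↦ ρ(x,y)` lie in a `μ_X`-null set,
the family `{ρ(·,y) dμ_{X_n}}` is uniformly integrable, and `μ_{X_n} → μ_X` weakly, then the
posterior distributions `μ_n(·,y)` converge weakly to `μ(·,y)` (i.e. the normalized integrals
of every bounded continuous function converge). -/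
theorem stmt12 {Ω F G : Type*} [mΩ : MeasurableSpace Ω]
    [TopologicalSpace F] [PolishSpace F] [MeasurableSpace F] [BorelSpace F]
    [TopologicalSpace G] [PolishSpace G] [MeasurableSpace G] [BorelSpace G]
    [AddCommGroup G] [IsTopologicalAddGroup G]
    (P : Measure Ω) [IsProbabilityMeasure P]
    (X : Ω → F) (Xn : ℕ → Ω → F) (ε : Ω → G)
    (hX : Measurable X) (hXn : ∀ n, Measurable (Xn n)) (hε : Measurable ε)
    (hindX : IndepFun X ε P) (hindXn : ∀ n, IndepFun (Xn n) ε P)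
    (L : F → G) (hL : Continuous L)
    (ν : Measure G) [SigmaFinite ν]
    (ρ : F → G → ℝ) (hρmeas : Measurable (Function.uncurry ρ)) (hρnn : ∀ x z, 0 ≤ ρ x z)
    (hdens : ∀ x, P.map (fun ω => ε ω + L x) =
      ν.withDensity (fun z => ENNReal.ofReal (ρ x z)))
    (y : G)
    (hX0 : 0 < ∫ x, ρ x y ∂(P.map X)) (hXint : Integrable (fun x => ρ x y) (P.map X))
    (hXn0 : ∀ n, 0 < ∫ x, ρ x y ∂(P.map (Xn n)))
    (hXnint : ∀ n, Integrable (fun x => ρ x y) (P.map (Xn n)))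
    (Nd : Set F) (hNd : P.map X Nd = 0)
    (hdisc : {x | ¬ ContinuousAt (fun x => ρ x y) x} ⊆ Nd)
    (hui : ∀ δ : ℝ, 0 < δ → ∃ C : ℝ, ∀ n,
      ∫ x in {x | C < ρ x y}, ρ x y ∂(P.map (Xn n)) < δ)
    (hweak : ∀ g : BoundedContinuousFunction F ℝ,
      Tendsto (fun n => ∫ x, g x ∂(P.map (Xn n))) atTop (𝓝 (∫ x, g x ∂(P.map X)))) :
    ∀ f : BoundedContinuousFunction F ℝ,
      Tendsto (fun n =>
          (∫ x, f x * ρ x y ∂(P.map (Xn n))) / ∫ x, ρ x y ∂(P.map (Xn n)))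
        atTop
        (𝓝 ((∫ x, f x * ρ x y ∂(P.map X)) / ∫ x, ρ x y ∂(P.map X))) :=
  stmt12_general (mΩ := mΩ) P X Xn hX hXn ρ hρmeas hρnn y hX0 hXint hXnint Nd hNd hdisc hui hweak
end

section
/- (Convergence of posterior means) Under Assumption A with F a separable Banach space, fix y with finite nonzero normalizing integrals for μ_X and all μ_{X_n}, suppose the discontinuities of x ↦ ρ(x,y) lie in a μ_X-null set, ‖·‖ρ(·,y) ∈ L¹(μ_X), and for k = 0,1, lim_{C→∞} sup_n ∫_{{‖x‖^k ρ(x,y)>C}} ‖x‖^k ρ(x,y) dμ_{X_n}(x) = 0. If μ_{X_n} → μ_X weakly, then the Bochner-integral posterior means ∫ x dμ_n(x,y) converge in the norm of F to ∫ x dμ(x,y). -/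
open MeasureTheory ProbabilityTheory Filter Topology
open scoped ENNReal

/-!
Truncating the integrands radially at a level `C`, the uniform tail bounds for `k = 0, 1` make the
truncation error small uniformly in `n`, so it suffices to pass to the limit in integrals of
bounded functions `g` that are continuous `μ_X`-almost everywhere. For such `g`, inner regularity
gives a compact set `K` of continuity points carrying almost all of the mass of `μ_X`, and a finite
partition of unity `(φ_c)` on `K`, subordinate to sets on which `g` oscillates by less than `ε`
around `g c`, yields `∑ φ_c • g c`, which is `ε`-close to `g` up to an error `M (1 - ∑ φ_c)`. Both
`∑ φ_c • g c` and `1 - ∑ φ_c` are built from bounded continuous functions, so their integrals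
converge by weak convergence; this replaces the Skorokhod representation used in the paper.
-/

theorem PartitionOfUnity.norm_sub_sum_smul_le {ι X E : Type*} [Fintype ι] [TopologicalSpace X]
    [SeminormedAddCommGroup E] [NormedSpace ℝ E] {s : Set X} (f : PartitionOfUnity ι X s)
    (x : X) {a : E} {v : ι → E} {ε : ℝ} (hε : 0 ≤ ε) (hv : ∀ i, f i x ≠ 0 → ‖a - v i‖ ≤ ε) :
    ‖a - ∑ i, f i x • v i‖ ≤ ε + (1 - ∑ i, f i x) * ‖a‖ := by
  have hsum : ∑ i, f i x ≤ 1 := by simpa only [finsum_eq_sum_of_fintype] using f.sum_le_one x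
  have hsplit : a - ∑ i, f i x • v i = ∑ i, f i x • (a - v i) + (1 - ∑ i, f i x) • a := by
    simp only [smul_sub, Finset.sum_sub_distrib, sub_smul, one_smul, Finset.sum_smul]
    abel
  calc ‖a - ∑ i, f i x • v i‖ ≤ (∑ i, f i x) * ε + (1 - ∑ i, f i x) * ‖a‖ := by
        rw [hsplit, Finset.sum_mul]
        refine (norm_add_le _ _).trans (add_le_add ((norm_sum_le _ _).trans ?_) ?_)
        · refine Finset.sum_le_sum fun i _ => ?_
          rw [norm_smul, Real.norm_of_nonneg (f.nonneg i x)]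
          by_cases hi : f i x = 0
          · simp [hi]
          · exact mul_le_mul_of_nonneg_left (hv i hi) (f.nonneg i x)
        · rw [norm_smul, Real.norm_of_nonneg (sub_nonneg.2 hsum)]
    _ ≤ ε + (1 - ∑ i, f i x) * ‖a‖ := by gcongr; exact mul_le_of_le_one_left hε hsum

theorem exists_partitionOfUnity_dist_lt_of_ae_continuousAt {Ω E : Type*} [TopologicalSpace Ω]
    [NormalSpace Ω] [R1Space Ω] [MeasurableSpace Ω] [BorelSpace Ω] [PseudoMetricSpace E]
    (μ : Measure Ω) [IsFiniteMeasure μ] [μ.InnerRegularCompactLTTop] {g : Ω → E}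
    (hcont : ∀ᵐ x ∂μ, ContinuousAt g x) {ε : ℝ} (hε : 0 < ε) {δ : ℝ≥0∞} (hδ : δ ≠ 0) :
    ∃ (K : Set Ω) (s : Finset Ω) (f : PartitionOfUnity s Ω K),
      IsClosed K ∧ μ Kᶜ < δ ∧ ∀ c z, f c z ≠ 0 → dist (g z) (g c) < ε := by
  set A := (toMeasurable μ {x | ¬ContinuousAt g x})ᶜ
  have hAc : μ Aᶜ = 0 := by rwa [compl_compl, measure_toMeasurable, ← ae_iff]
  obtain ⟨K, hKA, hK, hKc, hμK⟩ :=
    (measurableSet_toMeasurable _ _).compl.exists_isCompact_isClosed_sdiff_lt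
      (measure_ne_top μ A) hδ
  set U : Ω → Set Ω := fun c => interior {z | dist (g z) (g c) < ε}
  have hcover : ∀ x ∈ K, U x ∈ 𝓝 x := fun x hx =>
    interior_mem_nhds.2 <| (not_not.1 fun h => hKA hx (subset_toMeasurable _ _ h)).eventually
      (Metric.ball_mem_nhds _ hε)
  obtain ⟨s, -, hKs⟩ := hK.elim_nhds_subcover U hcover
  obtain ⟨f, hf⟩ := PartitionOfUnity.exists_isSubordinate_of_locallyFinite hKc
    (fun c : s => U c) (fun _ => isOpen_interior) (locallyFinite_of_finite _)
    (by rwa [Set.iUnion_subtype])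
  refine ⟨K, s, f, hKc, ?_, fun c z hz =>
    interior_subset (s := {z | dist (g z) (g c) < ε}) (hf c (subset_tsupport _ hz))⟩
  calc μ Kᶜ ≤ μ Aᶜ + μ (A \ K) :=
        (measure_mono fun x hx => (em (x ∈ A)).elim (fun hxA => Or.inr ⟨hxA, hx⟩) Or.inl).trans
          (measure_union_le _ _)
    _ < δ := by rwa [hAc, zero_add]

section RadialRetraction

variable {E : Type*} [SeminormedAddCommGroup E] [NormedSpace ℝ E] {C : ℝ}

noncomputable def radialRetraction (C : ℝ) (v : E) : E := (C / max ‖v‖ C) • v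

theorem continuous_radialRetraction (hC : 0 < C) : Continuous (radialRetraction (E := E) C) :=
  (continuous_const.div (continuous_norm.max continuous_const) fun _ =>
    (hC.trans_le (le_max_right _ _)).ne').smul continuous_id

theorem norm_radialRetraction (hC : 0 < C) (v : E) :
    ‖radialRetraction C v‖ = min ‖v‖ C := by
  have hmax : 0 < max ‖v‖ C := hC.trans_le (le_max_right _ _)
  rw [radialRetraction, norm_smul, Real.norm_of_nonneg (div_nonneg hC.le hmax.le)]
  rcases le_total ‖v‖ C with hv | hv
  · rw [max_eq_right hv, min_eq_left hv, div_self hC.ne', one_mul]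
  · rw [max_eq_left hv, min_eq_right hv, div_mul_cancel₀ _ (hC.trans_le hv).ne']

theorem norm_sub_radialRetraction_le (hC : 0 < C) (v : E) :
    ‖v - radialRetraction C v‖ ≤ {w : E | C < ‖w‖}.indicator norm v := by
  rcases le_or_gt ‖v‖ C with hv | hv
  · rw [radialRetraction, max_eq_right hv, div_self hC.ne', one_smul, sub_self, norm_zero]
    exact Set.indicator_nonneg (fun _ _ => norm_nonneg _) v
  · rw [Set.indicator_of_mem (show v ∈ {w : E | C < ‖w‖} from hv)]
    have hv0 : 0 < ‖v‖ := hC.trans hv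
    have hc : C / ‖v‖ ≤ 1 := (div_le_one hv0).2 hv.le
    have hsub : v - (C / ‖v‖) • v = (1 - C / ‖v‖) • v := by rw [sub_smul, one_smul]
    rw [radialRetraction, max_eq_left hv.le, hsub, norm_smul,
      Real.norm_of_nonneg (sub_nonneg.2 hc)]
    exact mul_le_of_le_one_left (norm_nonneg v) (sub_le_self _ (div_nonneg hC.le hv0.le))

end RadialRetraction

section Tails

variable {α E : Type*} [MeasurableSpace α] [NormedAddCommGroup E] {ν : Measure α} {u : α → E}

theorem antitone_setIntegral_norm_gt (hu : Integrable u ν) :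
    Antitone fun C : ℝ => ∫ x in {x | C < ‖u x‖}, ‖u x‖ ∂ν := fun _ _ hCC' =>
  setIntegral_mono_set hu.norm.integrableOn (Eventually.of_forall fun _ => norm_nonneg _)
    (Eventually.of_forall fun _ hx => hCC'.trans_lt hx)

theorem tendsto_setIntegral_norm_gt_atTop (hu : StronglyMeasurable u) (hi : Integrable u ν) :
    Tendsto (fun C : ℝ => ∫ x in {x | C < ‖u x‖}, ‖u x‖ ∂ν) atTop (𝓝 0) := by
  have h := tendsto_setIntegral_of_antitone (f := fun x => ‖u x‖) (μ := ν)
    (fun C : ℝ => measurableSet_lt measurable_const hu.norm.measurable)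
    (fun _ _ hCC' _ hx => hCC'.trans_lt hx) ⟨0, hi.norm.integrableOn⟩
  have hempty : ⋂ C : ℝ, {x | C < ‖u x‖} = ∅ :=
    Set.eq_empty_of_forall_notMem fun x hx => lt_irrefl ‖u x‖ (Set.mem_iInter.1 hx ‖u x‖)
  rwa [hempty, Measure.restrict_empty, integral_zero_measure] at h

theorem norm_integral_sub_integral_radialRetraction_le [NormedSpace ℝ E] {C : ℝ} (hC : 0 < C)
    (hu : Integrable u ν) :
    ‖∫ x, u x ∂ν - ∫ x, radialRetraction C (u x) ∂ν‖ ≤ ∫ x in {x | C < ‖u x‖}, ‖u x‖ ∂ν := by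
  have hr : Integrable (fun x => radialRetraction C (u x)) ν :=
    hu.mono ((continuous_radialRetraction hC).comp_aestronglyMeasurable hu.1)
      (Eventually.of_forall fun x => by rw [norm_radialRetraction hC]; exact min_le_left _ _)
  have hS : NullMeasurableSet {x | C < ‖u x‖} ν :=
    nullMeasurableSet_lt aemeasurable_const hu.norm.aemeasurable
  rw [← integral_sub hu hr, ← integral_indicator₀ hS]
  exact (norm_integral_le_integral_norm _).trans <| integral_mono (hu.sub hr).norm
    (hu.norm.indicator₀ hS) fun x => norm_sub_radialRetraction_le hC (u x)

end Tails

section WeakConvergence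

variable {Ω E ι ι' : Type*} [TopologicalSpace Ω] [MeasurableSpace Ω] [BorelSpace Ω]
  [NormedAddCommGroup E] [NormedSpace ℝ E] [CompleteSpace E] {s : Set Ω}

theorem PartitionOfUnity.integrable (f : PartitionOfUnity ι' Ω s) (ν : Measure Ω)
    [IsFiniteMeasure ν] (i : ι') : Integrable (f i) ν :=
  Integrable.of_bound (f i).continuous.aestronglyMeasurable 1 <| Eventually.of_forall fun x => by
    rw [Real.norm_of_nonneg (f.nonneg i x)]; exact f.le_one i x

theorem PartitionOfUnity.measureReal_le_sum_integral [Fintype ι'] (f : PartitionOfUnity ι' Ω s)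
    (ν : Measure Ω) [IsFiniteMeasure ν] (hs : MeasurableSet s) :
    ν.real s ≤ ∑ i, ∫ x, f i x ∂ν := by
  rw [← integral_indicator_one hs, ← integral_finsetSum _ fun i _ => f.integrable ν i]
  refine integral_mono ((integrable_const 1).indicator hs)
    (integrable_finsetSum _ fun i _ => f.integrable ν i) fun x => ?_
  by_cases hx : x ∈ s
  · simpa [hx, finsum_eq_sum_of_fintype] using (f.sum_eq_one hx).ge
  · simpa [hx, finsum_eq_sum_of_fintype] using f.sum_nonneg x

theorem PartitionOfUnity.norm_integral_sub_sum_smul_le [Fintype ι'] (f : PartitionOfUnity ι' Ω s)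
    (ν : Measure Ω) [IsProbabilityMeasure ν] {g : Ω → E} (hg : AEStronglyMeasurable g ν)
    {M : ℝ} (hM : ∀ x, ‖g x‖ ≤ M) {v : ι' → E} {ε : ℝ} (hε : 0 ≤ ε)
    (hv : ∀ i x, f i x ≠ 0 → ‖g x - v i‖ ≤ ε) :
    ‖∫ x, g x ∂ν - ∑ i, (∫ x, f i x ∂ν) • v i‖ ≤ ε + M * (1 - ∑ i, ∫ x, f i x ∂ν) := by
  have hf := f.integrable ν
  have hfsum : Integrable (fun x => ∑ i, f i x) ν := integrable_finsetSum _ fun i _ => hf i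
  have hsum : ∑ i, (∫ x, f i x ∂ν) • v i = ∫ x, ∑ i, f i x • v i ∂ν := by
    rw [integral_finsetSum _ fun i _ => (hf i).smul_const _]
    simp_rw [integral_smul_const]
  have hbound : ε + M * (1 - ∑ i, ∫ x, f i x ∂ν) = ∫ x, (ε + M * (1 - ∑ i, f i x)) ∂ν := by
    rw [integral_add (integrable_const _) ?_, integral_const_mul,
      integral_sub (integrable_const 1) hfsum, integral_finsetSum _ fun i _ => hf i]
    · simp
    · exact ((integrable_const 1).sub hfsum).const_mul M
  rw [hsum, hbound, ← integral_sub (Integrable.of_bound hg M (Eventually.of_forall hM))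
    (integrable_finsetSum _ fun i _ => (hf i).smul_const _)]
  refine (norm_integral_le_integral_norm _).trans <| integral_mono_of_nonneg
    (Eventually.of_forall fun _ => norm_nonneg _)
    ((integrable_const _).add (((integrable_const 1).sub hfsum).const_mul M))
    (Eventually.of_forall fun x => ?_)
  have hsum_le : ∑ i, f i x ≤ 1 := by simpa only [finsum_eq_sum_of_fintype] using f.sum_le_one x
  calc ‖g x - ∑ i, f i x • v i‖ ≤ ε + (1 - ∑ i, f i x) * ‖g x‖ :=
        f.norm_sub_sum_smul_le x hε fun i hi => hv i x hi
    _ ≤ ε + M * (1 - ∑ i, f i x) := by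
        rw [mul_comm]; gcongr; exact hM x

variable {L : Filter ι} {μs : ι → ProbabilityMeasure Ω} {μ : ProbabilityMeasure Ω}

theorem PartitionOfUnity.tendsto_integral (f : PartitionOfUnity ι' Ω s)
    (hμs : Tendsto μs L (𝓝 μ)) (i : ι') :
    Tendsto (fun j => ∫ x, f i x ∂(μs j)) L (𝓝 (∫ x, f i x ∂μ)) := by
  simpa using ProbabilityMeasure.tendsto_iff_forall_integral_tendsto.1 hμs
    (BoundedContinuousFunction.ofNormedAddCommGroup (f i) (f i).continuous 1 fun x => by
      rw [Real.norm_of_nonneg (f.nonneg i x)]; exact f.le_one i x)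

theorem ProbabilityMeasure.tendsto_integral_of_norm_le_of_ae_continuousAt [PolishSpace Ω]
    (hμs : Tendsto μs L (𝓝 μ)) {g : Ω → E} (hg : StronglyMeasurable g) {M : ℝ}
    (hM : ∀ x, ‖g x‖ ≤ M) (hcont : ∀ᵐ x ∂(μ : Measure Ω), ContinuousAt g x) :
    Tendsto (fun i => ∫ x, g x ∂(μs i)) L (𝓝 (∫ x, g x ∂μ)) := by
  set M' := max M 0
  have hM' : ∀ x, ‖g x‖ ≤ M' := fun x => (hM x).trans (le_max_left _ _)
  rw [Metric.tendsto_nhds]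
  intro η hη
  set ε := η / 5
  have hε : 0 < ε := by positivity
  obtain ⟨δ, hδ, hM'δ⟩ := exists_pos_mul_lt hε M'
  obtain ⟨K, s, f, hKcl, hK, hf⟩ := exists_partitionOfUnity_dist_lt_of_ae_continuousAt
    (μ : Measure Ω) hcont hε (ENNReal.ofReal_pos.2 hδ).ne'
  set a : Measure Ω → E := fun ν => ∑ c : s, (∫ x, f c x ∂ν) • g c
  set b : Measure Ω → ℝ := fun ν => 1 - ∑ c : s, ∫ x, f c x ∂ν
  have hbound (ν : Measure Ω) [IsProbabilityMeasure ν] : ‖∫ x, g x ∂ν - a ν‖ ≤ ε + M' * b ν :=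
    f.norm_integral_sub_sum_smul_le ν hg.aestronglyMeasurable hM' hε.le fun c x hx =>
      (dist_eq_norm (g x) (g c) ▸ hf c x hx).le
  have ha : Tendsto (fun i => a (μs i)) L (𝓝 (a μ)) :=
    tendsto_finsetSum _ fun c _ => (f.tendsto_integral hμs c).smul_const _
  have hb : Tendsto (fun i => b (μs i)) L (𝓝 (b μ)) :=
    tendsto_const_nhds.sub (tendsto_finsetSum _ fun c _ => f.tendsto_integral hμs c)
  have hbμ : b μ ≤ δ := by
    have hKc : (μ : Measure Ω).real Kᶜ ≤ δ := (ENNReal.toReal_lt_of_lt_ofReal hK).le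
    have hKμ := f.measureReal_le_sum_integral (μ : Measure Ω) hKcl.measurableSet
    rw [probReal_compl_eq_one_sub hKcl.measurableSet] at hKc
    linarith
  have hMb : M' * b μ < ε := (mul_le_mul_of_nonneg_left hbμ (le_max_right _ _)).trans_lt hM'δ
  filter_upwards [Metric.tendsto_nhds.1 ha ε hε, (hb.const_mul M').eventually_lt_const hMb]
    with i hai hbi
  have h1 := hbound (μs i)
  have h2 := hbound μ
  rw [norm_sub_rev] at h2
  rw [dist_eq_norm] at hai
  calc dist (∫ x, g x ∂(μs i)) (∫ x, g x ∂μ)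
      ≤ dist (∫ x, g x ∂(μs i)) (a (μs i)) + dist (a (μs i)) (a μ) + dist (a μ) (∫ x, g x ∂μ) :=
        dist_triangle4 _ _ _ _
    _ < η := by
        simp only [dist_eq_norm]
        linarith [show ε = η / 5 from rfl]

theorem ProbabilityMeasure.tendsto_integral_of_ae_continuousAt_of_tail [PolishSpace Ω]
    (hμs : Tendsto μs L (𝓝 μ)) {u : Ω → E} (hu : StronglyMeasurable u)
    (hcont : ∀ᵐ x ∂(μ : Measure Ω), ContinuousAt u x) (hint : Integrable u μ)
    (hints : ∀ i, Integrable u (μs i))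
    (htail : ∀ δ > 0, ∃ C, ∀ i, ∫ x in {x | C < ‖u x‖}, ‖u x‖ ∂(μs i) < δ) :
    Tendsto (fun i => ∫ x, u x ∂(μs i)) L (𝓝 (∫ x, u x ∂μ)) := by
  rw [Metric.tendsto_nhds]
  intro η hη
  have hη3 : 0 < η / 3 := by positivity
  obtain ⟨C₀, hC₀⟩ := htail _ hη3
  obtain ⟨C, hC, hCμs, hCμ⟩ : ∃ C, 0 < C ∧
      (∀ i, ∫ x in {x | C < ‖u x‖}, ‖u x‖ ∂(μs i) < η / 3) ∧
      ∫ x in {x | C < ‖u x‖}, ‖u x‖ ∂μ < η / 3 :=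
    ((eventually_gt_atTop 0).and ((eventually_ge_atTop C₀).and
      ((tendsto_setIntegral_norm_gt_atTop hu hint).eventually_lt_const hη3))).exists.imp
      fun C ⟨hC, hC₀C, hCμ⟩ =>
        ⟨hC, fun i => (antitone_setIntegral_norm_gt (hints i) hC₀C).trans_lt (hC₀ i), hCμ⟩
  have htrunc := tendsto_integral_of_norm_le_of_ae_continuousAt hμs
    ((continuous_radialRetraction hC).comp_stronglyMeasurable hu)
    (fun x => (norm_radialRetraction hC (u x)).trans_le (min_le_right _ _))
    (hcont.mono fun x hx => (continuous_radialRetraction hC).continuousAt.comp hx)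
  filter_upwards [Metric.tendsto_nhds.1 htrunc _ hη3] with i hi
  have h1 := norm_integral_sub_integral_radialRetraction_le hC (hints i)
  have h2 := norm_integral_sub_integral_radialRetraction_le hC hint
  rw [← dist_eq_norm] at h1 h2
  rw [dist_comm] at h2
  calc dist (∫ x, u x ∂(μs i)) (∫ x, u x ∂μ)
      ≤ dist (∫ x, u x ∂(μs i)) (∫ x, radialRetraction C (u x) ∂(μs i))
        + dist (∫ x, radialRetraction C (u x) ∂(μs i)) (∫ x, radialRetraction C (u x) ∂μ)
        + dist (∫ x, radialRetraction C (u x) ∂μ) (∫ x, u x ∂μ) := dist_triangle4 _ _ _ _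
    _ < η := by linarith [hCμs i]

end WeakConvergence

theorem stmt13_general {Ω F G : Type*} [mΩ : MeasurableSpace Ω]
    [NormedAddCommGroup F] [NormedSpace ℝ F] [CompleteSpace F] [SecondCountableTopology F]
    [MeasurableSpace F] [BorelSpace F]
    [MeasurableSpace G]
    (P : Measure Ω) [IsProbabilityMeasure P]
    (X : Ω → F) (Xn : ℕ → Ω → F)
    (hX : Measurable X) (hXn : ∀ n, Measurable (Xn n))
    (ρ : F → G → ℝ) (hρmeas : Measurable (Function.uncurry ρ)) (hρnn : ∀ x z, 0 ≤ ρ x z)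
    (y : G)
    (hX0 : 0 < ∫ x, ρ x y ∂(P.map X)) (hXint : Integrable (fun x => ρ x y) (P.map X))
    (hXnint : ∀ n, Integrable (fun x => ρ x y) (P.map (Xn n)))
    (Nd : Set F) (hNd : P.map X Nd = 0)
    (hdisc : {x | ¬ ContinuousAt (fun x => ρ x y) x} ⊆ Nd)
    (hnorm : Integrable (fun x => ‖x‖ * ρ x y) (P.map X))
    (hnormn : ∀ n, Integrable (fun x => ‖x‖ * ρ x y) (P.map (Xn n)))
    (hui : ∀ k : ℕ, k ≤ 1 → ∀ δ : ℝ, 0 < δ → ∃ C : ℝ, ∀ n,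
      ∫ x in {x | C < ‖x‖ ^ k * ρ x y}, ‖x‖ ^ k * ρ x y ∂(P.map (Xn n)) < δ)
    (hweak : ∀ g : BoundedContinuousFunction F ℝ,
      Tendsto (fun n => ∫ x, g x ∂(P.map (Xn n))) atTop (𝓝 (∫ x, g x ∂(P.map X)))) :
    Tendsto (fun n =>
        (∫ x, ρ x y ∂(P.map (Xn n)))⁻¹ • ∫ x, ρ x y • x ∂(P.map (Xn n)))
      atTop
      (𝓝 ((∫ x, ρ x y ∂(P.map X))⁻¹ • ∫ x, ρ x y • x ∂(P.map X))) := by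
  let μ : ProbabilityMeasure F := ⟨P.map X, Measure.isProbabilityMeasure_map hX.aemeasurable⟩
  let μs : ℕ → ProbabilityMeasure F :=
    fun n => ⟨P.map (Xn n), Measure.isProbabilityMeasure_map (hXn n).aemeasurable⟩
  have hμs : Tendsto μs atTop (𝓝 μ) :=
    ProbabilityMeasure.tendsto_iff_forall_integral_tendsto.2 hweak
  have hρy : Measurable fun x => ρ x y := hρmeas.comp (measurable_id.prodMk measurable_const)
  have hcont : ∀ᵐ x ∂(P.map X), ContinuousAt (fun x => ρ x y) x :=
    ae_iff.2 (measure_mono_null hdisc hNd)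
  have hnormρ (x : F) : ‖ρ x y‖ = ρ x y := Real.norm_of_nonneg (hρnn x y)
  have hnormsmul (x : F) : ‖ρ x y • x‖ = ‖x‖ * ρ x y := by rw [norm_smul, hnormρ, mul_comm]
  have hsmul_int {ν : Measure F} (h : Integrable (fun x => ‖x‖ * ρ x y) ν) :
      Integrable (fun x => ρ x y • x) ν :=
    h.mono' (hρy.smul measurable_id).aestronglyMeasurable
      (Eventually.of_forall fun x => (hnormsmul x).le)
  have hZ := ProbabilityMeasure.tendsto_integral_of_ae_continuousAt_of_tail hμs
    hρy.stronglyMeasurable hcont hXint hXnint fun δ hδ => by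
      have := hui 0 zero_le_one δ hδ
      simp only [hnormρ, pow_zero, one_mul] at this ⊢
      exact this
  have hm := ProbabilityMeasure.tendsto_integral_of_ae_continuousAt_of_tail hμs
    (u := fun x => ρ x y • x) (hρy.smul measurable_id).stronglyMeasurable
    (hcont.mono fun x hx => hx.smul continuousAt_id)
    (hsmul_int hnorm) (fun n => hsmul_int (hnormn n)) fun δ hδ => by
      have := hui 1 le_rfl δ hδ
      simp only [hnormsmul, pow_one] at this ⊢
      exact this
  exact (hZ.inv₀ hX0.ne').smul hm

/-- Convergence of posterior means: under Assumption A with `F` a separable Banach space, for a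
fixed observation `y` with finite nonzero normalizing integrals, if the discontinuities of
`x ↦ ρ(x,y)` lie in a `μ_X`-null set, `‖·‖ ρ(·,y) ∈ L¹(μ_X)`, and for `k = 0,1` the families
`{‖x‖^k ρ(x,y) dμ_{X_n}}` are uniformly integrable, then weak convergence `μ_{X_n} → μ_X`
implies norm convergence of the Bochner posterior means
`(∫ ρ(x,y) dμ_{X_n})⁻¹ • ∫ ρ(x,y) • x dμ_{X_n} → (∫ ρ(x,y) dμ_X)⁻¹ • ∫ ρ(x,y) • x dμ_X`. -/
theorem stmt13 {Ω F G : Type*} [mΩ : MeasurableSpace Ω]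
    [NormedAddCommGroup F] [NormedSpace ℝ F] [CompleteSpace F] [SecondCountableTopology F]
    [MeasurableSpace F] [BorelSpace F]
    [TopologicalSpace G] [PolishSpace G] [MeasurableSpace G] [BorelSpace G]
    [AddCommGroup G] [IsTopologicalAddGroup G]
    (P : Measure Ω) [IsProbabilityMeasure P]
    (X : Ω → F) (Xn : ℕ → Ω → F) (ε : Ω → G)
    (hX : Measurable X) (hXn : ∀ n, Measurable (Xn n)) (hε : Measurable ε)
    (hindX : IndepFun X ε P) (hindXn : ∀ n, IndepFun (Xn n) ε P)
    (L : F → G) (hL : Continuous L)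
    (ν : Measure G) [SigmaFinite ν]
    (ρ : F → G → ℝ) (hρmeas : Measurable (Function.uncurry ρ)) (hρnn : ∀ x z, 0 ≤ ρ x z)
    (hdens : ∀ x, P.map (fun ω => ε ω + L x) =
      ν.withDensity (fun z => ENNReal.ofReal (ρ x z)))
    (y : G)
    (hX0 : 0 < ∫ x, ρ x y ∂(P.map X)) (hXint : Integrable (fun x => ρ x y) (P.map X))
    (hXn0 : ∀ n, 0 < ∫ x, ρ x y ∂(P.map (Xn n)))
    (hXnint : ∀ n, Integrable (fun x => ρ x y) (P.map (Xn n)))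
    (Nd : Set F) (hNd : P.map X Nd = 0)
    (hdisc : {x | ¬ ContinuousAt (fun x => ρ x y) x} ⊆ Nd)
    (hnorm : Integrable (fun x => ‖x‖ * ρ x y) (P.map X))
    (hnormn : ∀ n, Integrable (fun x => ‖x‖ * ρ x y) (P.map (Xn n)))
    (hui : ∀ k : ℕ, k ≤ 1 → ∀ δ : ℝ, 0 < δ → ∃ C : ℝ, ∀ n,
      ∫ x in {x | C < ‖x‖ ^ k * ρ x y}, ‖x‖ ^ k * ρ x y ∂(P.map (Xn n)) < δ)
    (hweak : ∀ g : BoundedContinuousFunction F ℝ,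
      Tendsto (fun n => ∫ x, g x ∂(P.map (Xn n))) atTop (𝓝 (∫ x, g x ∂(P.map X)))) :
    Tendsto (fun n =>
        (∫ x, ρ x y ∂(P.map (Xn n)))⁻¹ • ∫ x, ρ x y • x ∂(P.map (Xn n)))
      atTop
      (𝓝 ((∫ x, ρ x y ∂(P.map X))⁻¹ • ∫ x, ρ x y • x ∂(P.map X))) :=
  stmt13_general (mΩ := mΩ) P X Xn hX hXn ρ hρmeas hρnn y hX0 hXint hXnint Nd hNd hdisc hnorm hnormn
    hui hweak
end

section
/- (Setwise/variation convergence of posteriors) Under Assumption A, fix y with finite nonzero normalizing integrals. Suppose the measures U ↦ ∫_U ρ(x,y) dμ_{X_n}(x) are uniformly bounded and equicontinuous at zero (for every decreasing sequence of Borel sets U_i ↓ ∅, lim_i sup_n ∫_{U_i} ρ(x,y) dμ_{X_n}(x) = 0). Then if μ_{X_n} converges setwise (respectively in total variation) to μ_X, the posterior distributions μ_n(·,y) converge setwise (respectively in total variation) to μ(·,y). -/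
open MeasureTheory ProbabilityTheory Filter Topology Set

/-! Truncate the likelihood `g = ρ(·, y)` at a level `K`. Equicontinuity at zero, applied to the
sets `{K ≤ g}`, makes the tails `∫_{K ≤ g} g` small uniformly in `n`, and integrability of `g`
makes the tail small for the limit. For the bounded part `min g K`, the layer-cake formula
`∫_U min g K dμ = ∫_0^K μ(U ∩ {t ≤ g}) dt` transfers setwise convergence (by dominated convergence
in `t`) and convergence in variation (with error at most `K · sup_V |μ_n V - μ V|`) from the priors
to the unnormalised posteriors. The normalising constants are the case `U = univ`, and the limit
one is positive, so the quotients converge as well, uniformly in `U` in the variation case. -/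

section LayerCake

variable {α : Type*} [MeasurableSpace α] {μ μ' : Measure α} {f : α → ℝ} {K : ℝ}

lemma integrableOn_Ioc_measureReal_le [IsFiniteMeasure μ] (f : α → ℝ) (K : ℝ) :
    IntegrableOn (fun t => μ.real {a | t ≤ f a}) (Ioc 0 K) := by
  have hanti : Antitone fun t : ℝ => μ.real {a | t ≤ f a} := fun s t hst =>
    measureReal_mono fun a ha => hst.trans ha
  refine Measure.integrableOn_of_bounded (M := μ.real univ) (by simp)
    hanti.measurable.aestronglyMeasurable (Eventually.of_forall fun t => ?_)
  rw [Real.norm_of_nonneg measureReal_nonneg]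
  exact measureReal_mono (subset_univ _)

lemma integral_eq_integral_Ioc_measureReal_le [IsFiniteMeasure μ] (hf : Measurable f)
    (hf0 : ∀ a, 0 ≤ f a) (hfK : ∀ a, f a ≤ K) :
    ∫ a, f a ∂μ = ∫ t in Ioc 0 K, μ.real {a | t ≤ f a} := by
  have hfi : Integrable f μ := Integrable.of_bound hf.aestronglyMeasurable K
    (ae_of_all _ fun a => by rw [Real.norm_of_nonneg (hf0 a)]; exact hfK a)
  exact hfi.integral_eq_integral_Ioc_meas_le (ae_of_all _ hf0) (ae_of_all _ hfK)

lemma abs_integral_sub_integral_le_mul [IsFiniteMeasure μ] [IsFiniteMeasure μ'] {Δ : ℝ}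
    (hf : Measurable f) (hf0 : ∀ a, 0 ≤ f a) (hfK : ∀ a, f a ≤ K) (hK : 0 ≤ K)
    (hΔ : ∀ s, MeasurableSet s → |μ'.real s - μ.real s| ≤ Δ) :
    |∫ a, f a ∂μ' - ∫ a, f a ∂μ| ≤ K * Δ := by
  rw [integral_eq_integral_Ioc_measureReal_le hf hf0 hfK,
    integral_eq_integral_Ioc_measureReal_le hf hf0 hfK,
    ← integral_sub (integrableOn_Ioc_measureReal_le f K) (integrableOn_Ioc_measureReal_le f K),
    ← Real.norm_eq_abs]
  calc _ ≤ Δ * volume.real (Ioc (0 : ℝ) K) :=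
        norm_setIntegral_le_of_norm_le_const (by simp) fun t _ =>
          hΔ _ (measurableSet_le measurable_const hf)
    _ = K * Δ := by rw [Real.volume_real_Ioc, sub_zero, max_eq_left hK, mul_comm]

lemma tendsto_integral_of_tendsto_measure {μs : ℕ → Measure α} [IsFiniteMeasure μ]
    [∀ n, IsFiniteMeasure (μs n)]
    (hμ : ∀ s, MeasurableSet s → Tendsto (fun n => μs n s) atTop (𝓝 (μ s)))
    (hf : Measurable f) (hf0 : ∀ a, 0 ≤ f a) (hfK : ∀ a, f a ≤ K) :
    Tendsto (fun n => ∫ a, f a ∂μs n) atTop (𝓝 (∫ a, f a ∂μ)) := by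
  have hμreal : ∀ s, MeasurableSet s → Tendsto (fun n => (μs n).real s) atTop (𝓝 (μ.real s)) :=
    fun s hs => (ENNReal.tendsto_toReal (measure_ne_top μ s)).comp (hμ s hs)
  simp only [integral_eq_integral_Ioc_measureReal_le hf hf0 hfK]
  refine tendsto_integral_filter_of_dominated_convergence (fun _ => μ.real univ + 1)
    (Eventually.of_forall fun n => (integrableOn_Ioc_measureReal_le f K).aestronglyMeasurable)
    ?_ (integrableOn_const (by simp))
    (ae_of_all _ fun t => hμreal _ (measurableSet_le measurable_const hf))
  filter_upwards [(hμreal univ MeasurableSet.univ).eventually (gt_mem_nhds (lt_add_one _))]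
    with n hn
  refine ae_of_all _ fun t => ?_
  rw [Real.norm_of_nonneg measureReal_nonneg]
  exact (measureReal_mono (subset_univ _)).trans hn.le

end LayerCake

section Truncation

variable {α : Type*} [MeasurableSpace α] {μ μ' : Measure α} {μs : ℕ → Measure α} {g : α → ℝ}
  {K : ℝ}

def EquicontinuousAtEmpty (m : ℕ → Set α → ℝ) : Prop :=
  ∀ U : ℕ → Set α, (∀ i, MeasurableSet (U i)) → Antitone U → (⋂ i, U i) = ∅ →
    ∀ δ : ℝ, 0 < δ → ∃ i0, ∀ i ≥ i0, ∀ n, m n (U i) < δ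

lemma abs_setIntegral_sub_setIntegral_min_le (hg : Measurable g) (hg0 : ∀ a, 0 ≤ g a)
    (hgi : Integrable g μ) (hK : 0 ≤ K) (U : Set α) :
    |∫ a in U, g a ∂μ - ∫ a in U, min (g a) K ∂μ| ≤ ∫ a in {a | K ≤ g a}, g a ∂μ := by
  have hmin : Integrable (fun a => min (g a) K) μ :=
    hgi.mono' (hg.min measurable_const).aestronglyMeasurable (ae_of_all _ fun a => by
      rw [Real.norm_of_nonneg (le_min (hg0 a) hK)]; exact min_le_left _ _)
  have hexcess : ∀ a, 0 ≤ g a - min (g a) K := fun a => sub_nonneg.2 (min_le_left _ _)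
  have hexcess_le : ∀ a, g a - min (g a) K ≤ {a | K ≤ g a}.indicator g a := fun a => by
    by_cases h : a ∈ {a | K ≤ g a}
    · rw [indicator_of_mem h, min_eq_right h.out]; linarith [hg0 a]
    · rw [indicator_of_notMem h, min_eq_left (not_le.1 h).le, sub_self]
  rw [← integral_sub hgi.integrableOn hmin.integrableOn,
    abs_of_nonneg (integral_nonneg hexcess),
    ← integral_indicator (measurableSet_le measurable_const hg)]
  calc ∫ a in U, g a - min (g a) K ∂μ ≤ ∫ a, g a - min (g a) K ∂μ :=
        setIntegral_le_integral (hgi.sub hmin) (ae_of_all _ hexcess)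
    _ ≤ ∫ a, {a | K ≤ g a}.indicator g a ∂μ :=
        integral_mono (hgi.sub hmin) (hgi.indicator (measurableSet_le measurable_const hg))
          hexcess_le

lemma exists_tail_integral_lt (hg : Measurable g) (hgi : Integrable g μ)
    (hequi : EquicontinuousAtEmpty fun n U => ∫ a in U, g a ∂μs n)
    {δ : ℝ} (hδ : 0 < δ) :
    ∃ K : ℝ, 0 ≤ K ∧ (∀ n, ∫ a in {a | K ≤ g a}, g a ∂μs n < δ) ∧
      ∫ a in {a | K ≤ g a}, g a ∂μ < δ := by
  set V : ℕ → Set α := fun i => {a | (i : ℝ) ≤ g a}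
  have hV : ∀ i, MeasurableSet (V i) := fun i => measurableSet_le measurable_const hg
  have hVanti : Antitone V := fun i j hij a (ha : (j : ℝ) ≤ g a) =>
    show (i : ℝ) ≤ g a from (Nat.cast_le.2 hij).trans ha
  have hVempty : (⋂ i, V i) = ∅ := by
    refine eq_empty_iff_forall_notMem.2 fun a ha => ?_
    obtain ⟨i, hi⟩ := exists_nat_gt (g a)
    exact (mem_iInter.1 ha i).not_gt hi
  obtain ⟨i0, hi0⟩ := hequi V hV hVanti hVempty δ hδ
  have hμtail : Tendsto (fun i => ∫ a in V i, g a ∂μ) atTop (𝓝 0) := by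
    simpa [hVempty] using tendsto_setIntegral_of_antitone hV hVanti ⟨0, hgi.integrableOn⟩
  obtain ⟨i1, hi1⟩ := eventually_atTop.1 (hμtail.eventually (gt_mem_nhds hδ))
  exact ⟨((max i0 i1 : ℕ) : ℝ), Nat.cast_nonneg _, hi0 _ (le_max_left _ _),
    hi1 _ (le_max_right _ _)⟩

lemma abs_setIntegral_sub_lt_of_truncation (hg : Measurable g) (hg0 : ∀ a, 0 ≤ g a)
    (hgi : Integrable g μ) (hgi' : Integrable g μ') (hK : 0 ≤ K) {δ : ℝ} {U : Set α}
    (htail : ∫ a in {a | K ≤ g a}, g a ∂μ < δ / 3)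
    (htail' : ∫ a in {a | K ≤ g a}, g a ∂μ' < δ / 3)
    (htrunc : |∫ a in U, min (g a) K ∂μ' - ∫ a in U, min (g a) K ∂μ| < δ / 3) :
    |∫ a in U, g a ∂μ' - ∫ a in U, g a ∂μ| < δ := by
  have h := abs_setIntegral_sub_setIntegral_min_le hg hg0 hgi hK U
  have h' := abs_setIntegral_sub_setIntegral_min_le hg hg0 hgi' hK U
  rw [abs_le] at h h'
  rw [abs_lt] at htrunc ⊢
  constructor <;> linarith [h.1, h.2, h'.1, h'.2, htrunc.1, htrunc.2]

variable [IsFiniteMeasure μ] [∀ n, IsFiniteMeasure (μs n)]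

theorem tendsto_setIntegral_of_tendsto_measure
    (hμ : ∀ s, MeasurableSet s → Tendsto (fun n => μs n s) atTop (𝓝 (μ s)))
    (hg : Measurable g) (hg0 : ∀ a, 0 ≤ g a) (hgi : Integrable g μ)
    (hgis : ∀ n, Integrable g (μs n))
    (hequi : EquicontinuousAtEmpty fun n U => ∫ a in U, g a ∂μs n)
    {U : Set α} (hU : MeasurableSet U) :
    Tendsto (fun n => ∫ a in U, g a ∂μs n) atTop (𝓝 (∫ a in U, g a ∂μ)) := by
  refine Metric.tendsto_atTop.2 fun δ hδ => ?_
  obtain ⟨K, hK, htails, htail⟩ := exists_tail_integral_lt hg hgi hequi (by positivity : 0 < δ / 3)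
  have htrunc : Tendsto (fun n => ∫ a in U, min (g a) K ∂μs n) atTop
      (𝓝 (∫ a in U, min (g a) K ∂μ)) :=
    tendsto_integral_of_tendsto_measure
      (fun s hs => by simpa only [Measure.restrict_apply hs] using hμ _ (hs.inter hU))
      (hg.min measurable_const) (fun a => le_min (hg0 a) hK) (fun a => min_le_right _ _)
  obtain ⟨N, hN⟩ := Metric.tendsto_atTop.1 htrunc (δ / 3) (by positivity)
  exact ⟨N, fun n hn => abs_setIntegral_sub_lt_of_truncation hg hg0 hgi (hgis n) hK htail
    (htails n) (hN n hn)⟩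

theorem exists_abs_setIntegral_sub_lt_of_abs_measureReal_sub_lt
    (hμ : ∀ Δ : ℝ, 0 < Δ → ∃ N, ∀ n ≥ N, ∀ s, MeasurableSet s →
      |(μs n).real s - μ.real s| < Δ)
    (hg : Measurable g) (hg0 : ∀ a, 0 ≤ g a) (hgi : Integrable g μ)
    (hgis : ∀ n, Integrable g (μs n))
    (hequi : EquicontinuousAtEmpty fun n U => ∫ a in U, g a ∂μs n)
    {δ : ℝ} (hδ : 0 < δ) :
    ∃ N, ∀ n ≥ N, ∀ U, MeasurableSet U → |∫ a in U, g a ∂μs n - ∫ a in U, g a ∂μ| < δ := by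
  obtain ⟨K, hK, htails, htail⟩ := exists_tail_integral_lt hg hgi hequi (by positivity : 0 < δ / 3)
  obtain ⟨N, hN⟩ := hμ (δ / (3 * (K + 1))) (by positivity)
  refine ⟨N, fun n hn U hU =>
    abs_setIntegral_sub_lt_of_truncation hg hg0 hgi (hgis n) hK htail (htails n) ?_⟩
  calc _ ≤ K * (δ / (3 * (K + 1))) :=
        abs_integral_sub_integral_le_mul (hg.min measurable_const) (fun a => le_min (hg0 a) hK)
          (fun a => min_le_right _ _) hK fun s hs => by
            simpa only [measureReal_restrict_apply hs] using (hN n hn _ (hs.inter hU)).le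
    _ < δ / 3 := by
        rw [mul_div_assoc', div_lt_div_iff₀ (by positivity) (by positivity)]
        nlinarith

end Truncation

lemma exists_pos_forall_abs_div_sub_div_lt {b δ : ℝ} (hb : 0 < b) (hδ : 0 < δ) :
    ∃ e > 0, ∀ a a' b' : ℝ, 0 ≤ a → a ≤ b → |a' - a| < e → |b' - b| < e →
      |a' / b' - a / b| < δ := by
  set e := min (b / 2) (δ * b / 4)
  refine ⟨e, by positivity, fun a a' b' ha hab ha' hb' => ?_⟩
  have he : e ≤ b / 2 := min_le_left _ _
  have heδ : e ≤ δ * b / 4 := min_le_right _ _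
  have hb'b : b / 2 < b' := by linarith [(abs_lt.1 hb').1]
  have hb'0 : 0 < b' := by linarith
  rw [div_sub_div _ _ hb'0.ne' hb.ne', abs_div, abs_of_pos (mul_pos hb'0 hb),
    div_lt_iff₀ (mul_pos hb'0 hb)]
  calc |a' * b - b' * a| = |(a' - a) * b + a * (b - b')| := by ring_nf
    _ ≤ |a' - a| * b + a * |b' - b| := by
        refine (abs_add_le _ _).trans_eq ?_
        rw [abs_mul, abs_mul, abs_of_pos hb, abs_of_nonneg ha, abs_sub_comm b]
    _ < e * b + b * e := add_lt_add_of_lt_of_le (mul_lt_mul_of_pos_right ha' hb)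
        (mul_le_mul hab hb'.le (abs_nonneg _) hb.le)
    _ ≤ δ * (b / 2 * b) := by nlinarith
    _ < δ * (b' * b) := by gcongr

theorem stmt14_general {Ω F G : Type*} [mΩ : MeasurableSpace Ω] [MeasurableSpace F] [MeasurableSpace G]
    (P : Measure Ω) [IsProbabilityMeasure P]
    (X : Ω → F) (Xn : ℕ → Ω → F)
    (ρ : F → G → ℝ) (hρmeas : Measurable (Function.uncurry ρ)) (hρnn : ∀ x z, 0 ≤ ρ x z)
    (y : G)
    (hX0 : 0 < ∫ x, ρ x y ∂(P.map X)) (hXint : Integrable (fun x => ρ x y) (P.map X))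
    (hXnint : ∀ n, Integrable (fun x => ρ x y) (P.map (Xn n)))
    (hequi : ∀ U : ℕ → Set F, (∀ i, MeasurableSet (U i)) → Antitone U →
      (⋂ i, U i) = ∅ → ∀ δ : ℝ, 0 < δ → ∃ i0, ∀ i ≥ i0, ∀ n,
        ∫ x in U i, ρ x y ∂(P.map (Xn n)) < δ) :
    ((∀ U : Set F, MeasurableSet U →
        Tendsto (fun n => P.map (Xn n) U) atTop (𝓝 (P.map X U))) →
      ∀ U : Set F, MeasurableSet U →
        Tendsto (fun n =>
            (∫ x in U, ρ x y ∂(P.map (Xn n))) / ∫ x, ρ x y ∂(P.map (Xn n)))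
          atTop
          (𝓝 ((∫ x in U, ρ x y ∂(P.map X)) / ∫ x, ρ x y ∂(P.map X)))) ∧
    ((∀ δ : ℝ, 0 < δ → ∃ N, ∀ n ≥ N, ∀ U : Set F, MeasurableSet U →
        |(P.map (Xn n) U).toReal - (P.map X U).toReal| < δ) →
      ∀ δ : ℝ, 0 < δ → ∃ N, ∀ n ≥ N, ∀ U : Set F, MeasurableSet U →
        |(∫ x in U, ρ x y ∂(P.map (Xn n))) / (∫ x, ρ x y ∂(P.map (Xn n))) -
          (∫ x in U, ρ x y ∂(P.map X)) / (∫ x, ρ x y ∂(P.map X))| < δ) := by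
  have hg : Measurable fun x => ρ x y := hρmeas.comp (measurable_id.prodMk measurable_const)
  have hg0 : ∀ x, 0 ≤ ρ x y := fun x => hρnn x y
  constructor
  · intro hμ U hU
    have hconv : ∀ V, MeasurableSet V → Tendsto (fun n => ∫ x in V, ρ x y ∂(P.map (Xn n)))
        atTop (𝓝 (∫ x in V, ρ x y ∂(P.map X))) := fun V hV =>
      tendsto_setIntegral_of_tendsto_measure hμ hg hg0 hXint hXnint hequi hV
    have hnorm := hconv univ MeasurableSet.univ
    simp only [setIntegral_univ] at hnorm
    exact (hconv U hU).div hnorm hX0.ne'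
  · intro hμ δ hδ
    obtain ⟨e, he, hratio⟩ := exists_pos_forall_abs_div_sub_div_lt hX0 hδ
    obtain ⟨N, hN⟩ :=
      exists_abs_setIntegral_sub_lt_of_abs_measureReal_sub_lt hμ hg hg0 hXint hXnint hequi he
    refine ⟨N, fun n hn U hU => hratio _ _ _ (setIntegral_nonneg hU fun x _ => hg0 x)
      (setIntegral_le_integral hXint (ae_of_all _ hg0)) (hN n hn U hU) ?_⟩
    simpa only [setIntegral_univ] using hN n hn univ MeasurableSet.univ

/-- Setwise / total-variation posterior convergence: under Assumption A, for a fixed observation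
`y` with finite nonzero normalizing integrals, if the measures `U ↦ ∫_U ρ(x,y) dμ_{X_n}` are
uniformly bounded and equicontinuous at zero, then setwise (resp. uniform, i.e. in variation)
convergence of the priors `μ_{X_n} → μ_X` implies setwise (resp. in variation) convergence of
the posterior distributions `μ_n(·,y) → μ(·,y)`. -/
theorem stmt14 {Ω F G : Type*} [mΩ : MeasurableSpace Ω]
    [TopologicalSpace F] [PolishSpace F] [MeasurableSpace F] [BorelSpace F]
    [TopologicalSpace G] [PolishSpace G] [MeasurableSpace G] [BorelSpace G]
    [AddCommGroup G] [IsTopologicalAddGroup G]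
    (P : Measure Ω) [IsProbabilityMeasure P]
    (X : Ω → F) (Xn : ℕ → Ω → F) (ε : Ω → G)
    (hX : Measurable X) (hXn : ∀ n, Measurable (Xn n)) (hε : Measurable ε)
    (hindX : IndepFun X ε P) (hindXn : ∀ n, IndepFun (Xn n) ε P)
    (L : F → G) (hL : Continuous L)
    (ν : Measure G) [SigmaFinite ν]
    (ρ : F → G → ℝ) (hρmeas : Measurable (Function.uncurry ρ)) (hρnn : ∀ x z, 0 ≤ ρ x z)
    (hdens : ∀ x, P.map (fun ω => ε ω + L x) =
      ν.withDensity (fun z => ENNReal.ofReal (ρ x z)))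
    (y : G)
    (hX0 : 0 < ∫ x, ρ x y ∂(P.map X)) (hXint : Integrable (fun x => ρ x y) (P.map X))
    (hXn0 : ∀ n, 0 < ∫ x, ρ x y ∂(P.map (Xn n)))
    (hXnint : ∀ n, Integrable (fun x => ρ x y) (P.map (Xn n)))
    (hbdd : ∃ M : ℝ, ∀ n, ∫ x, ρ x y ∂(P.map (Xn n)) ≤ M)
    (hequi : ∀ U : ℕ → Set F, (∀ i, MeasurableSet (U i)) → Antitone U →
      (⋂ i, U i) = ∅ → ∀ δ : ℝ, 0 < δ → ∃ i0, ∀ i ≥ i0, ∀ n,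
        ∫ x in U i, ρ x y ∂(P.map (Xn n)) < δ) :
    ((∀ U : Set F, MeasurableSet U →
        Tendsto (fun n => P.map (Xn n) U) atTop (𝓝 (P.map X U))) →
      ∀ U : Set F, MeasurableSet U →
        Tendsto (fun n =>
            (∫ x in U, ρ x y ∂(P.map (Xn n))) / ∫ x, ρ x y ∂(P.map (Xn n)))
          atTop
          (𝓝 ((∫ x in U, ρ x y ∂(P.map X)) / ∫ x, ρ x y ∂(P.map X)))) ∧
    ((∀ δ : ℝ, 0 < δ → ∃ N, ∀ n ≥ N, ∀ U : Set F, MeasurableSet U →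
        |(P.map (Xn n) U).toReal - (P.map X U).toReal| < δ) →
      ∀ δ : ℝ, 0 < δ → ∃ N, ∀ n ≥ N, ∀ U : Set F, MeasurableSet U →
        |(∫ x in U, ρ x y ∂(P.map (Xn n))) / (∫ x, ρ x y ∂(P.map (Xn n))) -
          (∫ x in U, ρ x y ∂(P.map X)) / (∫ x, ρ x y ∂(P.map X))| < δ) :=
  stmt14_general (mΩ := mΩ) P X Xn ρ hρmeas hρnn y hX0 hXint hXnint hequi
end

section
/- Let Z = Σ_{i=1}^∞ Z_i e_i be a Gaussian random variable in a separable Hilbert space G (with {e_i} an orthonormal basis of the Cameron–Martin space H and Z_i i.i.d. standard normals), let γ be a nonnegative real random variable with no atom at zero, let X be F-valued, with γ, X, Z mutually independent, and let L : F → H ⊆ G be continuous. Then for Y = L(X) + γZ, the limit lim_{n→∞} (1/n) Σ_{i=1}^n ⟨Y, C_Z^{-1} e_i⟩² exists P-almost surely and equals γ² P-almost surely. -/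
/-!
Write `ζᵢ = ξᵢ(Z)`. By linearity `ξᵢ(Y) = ξᵢ(L X) + γ ζᵢ`. The `ζᵢ²` are i.i.d. with mean `1`,
so by the strong law their Cesàro means tend to `1` almost surely. On that event, for the fixed
square-summable sequence `aᵢ = ξᵢ(L X)`, the Cesàro means of `aᵢ²` tend to `0`, those of the cross
terms `aᵢ ζᵢ` tend to `0` by Cauchy–Schwarz, and so the Cesàro means of `(aᵢ + γ ζᵢ)²` tend to `γ²`.
-/

open MeasureTheory ProbabilityTheory Filter Topology Finset

lemma integral_sq_gaussianReal (μ : ℝ) (v : NNReal) :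
    ∫ x, x ^ 2 ∂gaussianReal μ v = μ ^ 2 + v := by
  have h := variance_eq_sub (memLp_id_gaussianReal (μ := μ) (v := v) 2)
  simp only [variance_id_gaussianReal, Pi.pow_apply, id_eq, integral_id_gaussianReal] at h
  linarith

lemma integrable_sq_gaussianReal (μ : ℝ) (v : NNReal) :
    Integrable (fun x => x ^ 2) (gaussianReal μ v) :=
  (memLp_id_gaussianReal 2).integrable_sq

section Cesaro

variable {a z : ℕ → ℝ}

lemma Summable.tendsto_cesaro_zero (ha : Summable a) :
    Tendsto (fun n : ℕ => (1 / (n : ℝ)) * ∑ i ∈ range n, a i) atTop (𝓝 0) := by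
  simpa using tendsto_one_div_atTop_nhds_zero_nat.mul ha.hasSum.tendsto_sum_nat

lemma cesaro_mul_sq_le (n : ℕ) :
    ((1 / (n : ℝ)) * ∑ i ∈ range n, a i * z i) ^ 2 ≤
      ((1 / (n : ℝ)) * ∑ i ∈ range n, a i ^ 2) * ((1 / (n : ℝ)) * ∑ i ∈ range n, z i ^ 2) := by
  calc ((1 / (n : ℝ)) * ∑ i ∈ range n, a i * z i) ^ 2
      = (1 / (n : ℝ)) ^ 2 * (∑ i ∈ range n, a i * z i) ^ 2 := by ring
    _ ≤ (1 / (n : ℝ)) ^ 2 * ((∑ i ∈ range n, a i ^ 2) * ∑ i ∈ range n, z i ^ 2) := by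
      gcongr; exact sum_mul_sq_le_sq_mul_sq _ a z
    _ = _ := by ring

lemma tendsto_cesaro_mul_zero {m : ℝ}
    (ha : Tendsto (fun n : ℕ => (1 / (n : ℝ)) * ∑ i ∈ range n, a i ^ 2) atTop (𝓝 0))
    (hz : Tendsto (fun n : ℕ => (1 / (n : ℝ)) * ∑ i ∈ range n, z i ^ 2) atTop (𝓝 m)) :
    Tendsto (fun n : ℕ => (1 / (n : ℝ)) * ∑ i ∈ range n, a i * z i) atTop (𝓝 0) := by
  have hsq : Tendsto (fun n : ℕ => ((1 / (n : ℝ)) * ∑ i ∈ range n, a i * z i) ^ 2)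
      atTop (𝓝 0) :=
    squeeze_zero (fun n => sq_nonneg _) cesaro_mul_sq_le (by simpa using ha.mul hz)
  have habs := (Real.continuous_sqrt.tendsto 0).comp hsq
  simp only [Function.comp_def, Real.sqrt_sq_eq_abs, Real.sqrt_zero] at habs
  exact (tendsto_zero_iff_abs_tendsto_zero _).2 habs

lemma tendsto_cesaro_sq_add_mul_of_summable_sq {m : ℝ} (ha : Summable fun i => a i ^ 2)
    (hz : Tendsto (fun n : ℕ => (1 / (n : ℝ)) * ∑ i ∈ range n, z i ^ 2) atTop (𝓝 m)) (c : ℝ) :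
    Tendsto (fun n : ℕ => (1 / (n : ℝ)) * ∑ i ∈ range n, (a i + c * z i) ^ 2)
      atTop (𝓝 (c ^ 2 * m)) := by
  have hA := ha.tendsto_cesaro_zero
  have hB := tendsto_cesaro_mul_zero hA hz
  have hexpand : ∀ n : ℕ, (1 / (n : ℝ)) * ∑ i ∈ range n, (a i + c * z i) ^ 2 =
      (1 / (n : ℝ)) * ∑ i ∈ range n, a i ^ 2
        + 2 * c * ((1 / (n : ℝ)) * ∑ i ∈ range n, a i * z i)
        + c ^ 2 * ((1 / (n : ℝ)) * ∑ i ∈ range n, z i ^ 2) := fun n => by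
    rw [sum_congr rfl fun i _ => show (a i + c * z i) ^ 2 =
        a i ^ 2 + 2 * c * (a i * z i) + c ^ 2 * z i ^ 2 by ring,
      sum_add_distrib, sum_add_distrib, ← mul_sum, ← mul_sum]
    ring
  simp only [hexpand]
  simpa using (hA.add (hB.const_mul (2 * c))).add (hz.const_mul (c ^ 2))

end Cesaro

lemma ae_tendsto_cesaro_sq_of_iIndepFun {Ω : Type*} [MeasurableSpace Ω] {P : Measure Ω}
    {ζ : ℕ → Ω → ℝ} {ν : Measure ℝ} (hζ : ∀ i, AEMeasurable (ζ i) P) (hindep : iIndepFun ζ P)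
    (hlaw : ∀ i, P.map (ζ i) = ν) (hν : Integrable (fun x => x ^ 2) ν) :
    ∀ᵐ ω ∂P, Tendsto (fun n : ℕ => (1 / (n : ℝ)) * ∑ i ∈ range n, ζ i ω ^ 2)
      atTop (𝓝 (∫ x, x ^ 2 ∂ν)) := by
  have hsq : Measurable fun x : ℝ => x ^ 2 := measurable_id.pow_const 2
  have hident : ∀ i, IdentDistrib (fun ω => ζ i ω ^ 2) (fun ω => ζ 0 ω ^ 2) P P := fun i =>
    (⟨hζ i, hζ 0, by rw [hlaw i, hlaw 0]⟩ : IdentDistrib (ζ i) (ζ 0) P P).comp hsq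
  have hint : Integrable (fun ω => ζ 0 ω ^ 2) P := by
    rw [← hlaw 0] at hν
    exact (integrable_map_measure hsq.aestronglyMeasurable (hζ 0)).1 hν
  have hmean : P[fun ω => ζ 0 ω ^ 2] = ∫ x, x ^ 2 ∂ν := by
    rw [← hlaw 0, integral_map (hζ 0) hsq.aestronglyMeasurable]
  have hslln := strong_law_ae (fun i ω => ζ i ω ^ 2) hint
    (fun i j hij => (hindep.indepFun hij).comp hsq hsq) hident
  simpa only [hmean, one_div, smul_eq_mul] using hslln

theorem stmt18_general {Ω F G : Type*} [mΩ : MeasurableSpace Ω]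
    [AddCommGroup G] [Module ℝ G] [MeasurableSpace G]
    (P : Measure Ω)
    (Z : Ω → G) (γ : Ω → ℝ) (X : Ω → F)
    (hZ : Measurable Z)
    (ξ : ℕ → G → ℝ) (hξlin : ∀ i, IsLinearMap ℝ (ξ i)) (hξmeas : ∀ i, Measurable (ξ i))
    (hξindep : iIndepFun (fun i ω => ξ i (Z ω)) P)
    (hξlaw : ∀ i, P.map (fun ω => ξ i (Z ω)) = gaussianReal 0 1)
    (L : F → G)
    (hL2 : ∀ x, Summable fun i => ξ i (L x) ^ 2) :
    ∀ᵐ ω ∂P, Tendsto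
      (fun n : ℕ =>
        (1 / (n : ℝ)) * ∑ i ∈ Finset.range n, ξ i (L (X ω) + γ ω • Z ω) ^ 2)
      atTop (𝓝 (γ ω ^ 2)) := by
  have hslln := ae_tendsto_cesaro_sq_of_iIndepFun
    (fun i => ((hξmeas i).comp hZ).aemeasurable) hξindep hξlaw (integrable_sq_gaussianReal 0 1)
  filter_upwards [hslln] with ω hω
  have hlin : ∀ i, ξ i (L (X ω) + γ ω • Z ω) = ξ i (L (X ω)) + γ ω * ξ i (Z ω) := fun i => by
    rw [(hξlin i).map_add, (hξlin i).map_smul, smul_eq_mul]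
  simp only [integral_sq_gaussianReal, NNReal.coe_one] at hω
  simpa only [hlin, Function.comp_apply, mul_one, zero_pow two_ne_zero, zero_add] using
    tendsto_cesaro_sq_add_mul_of_summable_sq (hL2 (X ω)) hω (γ ω)

/-- Spherically invariant noise: let `Z` be a Gaussian random variable in `G` whose standardized
coordinates `ξ i ∘ Z` (with `ξ i = ⟨·, C_Z⁻¹ e_i⟩` linear functionals) are i.i.d. standard
normal, let `γ ≥ 0` have no atom at zero, `X` be `F`-valued, with `γ, X, Z` mutually
independent, and let `L` map `F` continuously into the Cameron–Martin space of `Z` (so that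
`i ↦ ξ i (L x)` is square-summable). Then for `Y = L(X) + γ Z`, almost surely
`(1/n) Σ_{i<n} ⟨Y, C_Z⁻¹ e_i⟩² → γ²`. -/
theorem stmt18 {Ω F G : Type*} [mΩ : MeasurableSpace Ω]
    [TopologicalSpace F] [MeasurableSpace F] [BorelSpace F]
    [AddCommGroup G] [Module ℝ G] [TopologicalSpace G] [MeasurableSpace G] [BorelSpace G]
    (P : Measure Ω) [IsProbabilityMeasure P]
    (Z : Ω → G) (γ : Ω → ℝ) (X : Ω → F)
    (hZ : Measurable Z) (hγ : Measurable γ) (hX : Measurable X)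
    (hγnn : ∀ ω, 0 ≤ γ ω) (hγ0 : P {ω | γ ω = 0} = 0)
    (hind1 : IndepFun (fun ω => (γ ω, X ω)) Z P)
    (hind2 : IndepFun γ X P)
    (ξ : ℕ → G → ℝ) (hξlin : ∀ i, IsLinearMap ℝ (ξ i)) (hξmeas : ∀ i, Measurable (ξ i))
    (hξindep : iIndepFun (fun i ω => ξ i (Z ω)) P)
    (hξlaw : ∀ i, P.map (fun ω => ξ i (Z ω)) = gaussianReal 0 1)
    (L : F → G) (hL : Continuous L)
    (hL2 : ∀ x, Summable fun i => ξ i (L x) ^ 2) :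
    ∀ᵐ ω ∂P, Tendsto
      (fun n : ℕ =>
        (1 / (n : ℝ)) * ∑ i ∈ Finset.range n, ξ i (L (X ω) + γ ω • Z ω) ^ 2)
      atTop (𝓝 (γ ω ^ 2)) :=
  stmt18_general (mΩ := mΩ) P Z γ X hZ ξ hξlin hξmeas hξindep hξlaw L hL2
end

section
/- Let B be a standard Brownian motion on [0,T] and ε_t = B_{α_t} a time-changed process where α is an independent strictly increasing continuous process with α_0 = 0; then ε defines a C([0,T])-valued random variable, and for any Borel set V ⊆ C([0,T]) and any deterministic continuous path g of α, the conditional probability E[1_V(B_α + h) | σ(α)] evaluated at α = g equals the Gaussian measure on C([0,T]) with mean h and covariance kernel C_g(t,s) = min(g(t), g(s)). -/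
/-
For a fixed path `g`, the process `B ∘ g + h` is Gaussian: `B` has independent Gaussian increments,
hence is a pre-Brownian motion, so `∑ cⱼ B(g tⱼ)` is a centred Gaussian with variance
`∑ cⱼ cₗ min (g tⱼ) (g tₗ)`, which gives the finite-dimensional characteristic functions.
Since `B` and `α` are independent, the joint law of `(B, α)` is a product, and Fubini shows that
conditioning `1_V (B ∘ α + h)` on `σ(α)` amounts to freezing `α = g` and integrating out `B`.
-/

open MeasureTheory ProbabilityTheory
open scoped NNReal

section

variable {Ω : Type*} {mΩ : MeasurableSpace Ω} {P : Measure Ω}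

theorem ContinuousMap.measurable_comp_add {X Y : Type*} [TopologicalSpace X] [TopologicalSpace Y]
    [MeasurableSpace C(Y, ℝ)] [BorelSpace C(Y, ℝ)] [MeasurableSpace C(X, ℝ)] [BorelSpace C(X, ℝ)]
    (g : C(X, Y)) (h : C(X, ℝ)) : Measurable fun b : C(Y, ℝ) => b.comp g + h :=
  ((ContinuousMap.continuous_precomp g).add continuous_const).measurable

theorem isPreBrownianReal_of_map_sub_eq_gaussianReal {X : ℝ → Ω → ℝ}
    (h0 : ∀ᵐ ω ∂P, X 0 ω = 0)
    (hincr : ∀ (n : ℕ) (t : Fin (n + 1) → ℝ), Monotone t → (∀ j, 0 ≤ t j) →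
      iIndepFun (fun (j : Fin n) (ω : Ω) => X (t j.succ) ω - X (t j.castSucc) ω) P)
    (hlaw : ∀ s t : ℝ, 0 ≤ s → s ≤ t →
      P.map (fun ω => X t ω - X s ω) = gaussianReal 0 (Real.toNNReal (t - s))) :
    IsPreBrownianReal (fun (t : ℝ≥0) => X t) P := by
  refine HasIndepIncrements.isPreBrownianReal_of_hasLaw (fun t => ?_)
    (fun n t ht => hincr n (fun j => t j) (NNReal.coe_mono.comp ht) fun j => (t j).2)
  have hsub : HasLaw (fun ω => X t ω - X 0 ω) (gaussianReal 0 t) P := by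
    have hmap := hlaw 0 t le_rfl t.2
    rw [sub_zero, Real.toNNReal_coe] at hmap
    exact ⟨AEMeasurable.of_map_ne_zero (hmap ▸ IsProbabilityMeasure.ne_zero _), hmap⟩
  exact hsub.congr (by filter_upwards [h0] with ω hω; simp [hω])

theorem ProbabilityTheory.IsPreBrownianReal.variance_sum_mul {W : ℝ≥0 → Ω → ℝ}
    (hW : IsPreBrownianReal W P)
    {ι : Type*} [Fintype ι] (s : ι → ℝ≥0) (c : ι → ℝ) :
    Var[fun ω => ∑ j, c j * W (s j) ω; P] = ∑ j, ∑ l, c j * c l * min (s j : ℝ) (s l) := by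
  have := hW.isGaussianProcess.isProbabilityMeasure
  have hL2 : ∀ j, MemLp (fun ω => c j * W (s j) ω) 2 P := fun j =>
    ((hW.isGaussianProcess.hasGaussianLaw_eval (s j)).memLp_two).const_mul (c j)
  rw [← covariance_self (memLp_finsetSum _ fun j _ => hL2 j).aemeasurable,
    covariance_fun_sum_fun_sum hL2 hL2]
  simp_rw [covariance_const_mul_left, covariance_const_mul_right, hW.covariance_fun_eval,
    NNReal.coe_min, mul_assoc]

theorem ProbabilityTheory.IsPreBrownianReal.hasLaw_sum_mul {W : ℝ≥0 → Ω → ℝ}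
    (hW : IsPreBrownianReal W P)
    {ι : Type*} [Fintype ι] (s : ι → ℝ≥0) (c : ι → ℝ) :
    HasLaw (fun ω => ∑ j, c j * W (s j) ω)
      (gaussianReal 0 (∑ j, ∑ l, c j * c l * min (s j : ℝ) (s l)).toNNReal) P := by
  have := hW.isGaussianProcess.isProbabilityMeasure
  have hG : HasGaussianLaw (fun ω => ∑ j, c j * W (s j) ω) P :=
    ((hW.isGaussianProcess.comp_right s).smul c).hasGaussianLaw_fun_sum (I := Finset.univ)
  refine ⟨hG.aemeasurable, ?_⟩
  rw [hG.map_eq_gaussianReal, hW.variance_sum_mul, integral_finsetSum _ fun j _ =>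
    ((hW.integrable_eval (s j)).const_mul (c j))]
  simp_rw [integral_const_mul, hW.integral_eval, mul_zero, Finset.sum_const_zero]

theorem integral_cexp_map_comp_add [MeasurableSpace C(ℝ, ℝ)] [BorelSpace C(ℝ, ℝ)]
    {K : Type*} [TopologicalSpace K] [MeasurableSpace C(K, ℝ)] [BorelSpace C(K, ℝ)]
    {B : Ω → C(ℝ, ℝ)} (hB : Measurable B) (hW : IsPreBrownianReal (fun (t : ℝ≥0) ω => B ω t) P)
    {g : C(K, ℝ)} (hg : ∀ u, 0 ≤ g u) (h : C(K, ℝ)) {ι : Type*} [Fintype ι] (t : ι → K)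
    (c : ι → ℝ) :
    ∫ y, Complex.exp (Complex.I * ((∑ j, c j * y (t j) : ℝ) : ℂ))
        ∂((P.map B).map fun b => b.comp g + h) =
      Complex.exp (Complex.I * ((∑ j, c j * h (t j) : ℝ) : ℂ) -
        (1 / 2 : ℂ) * ((∑ j, ∑ l, c j * c l * min (g (t j)) (g (t l)) : ℝ) : ℂ)) := by
  set s : ι → ℝ≥0 := fun j => ⟨g (t j), hg (t j)⟩
  have hv : 0 ≤ ∑ j, ∑ l, c j * c l * min (g (t j)) (g (t l)) :=
    (variance_nonneg _ _).trans_eq (hW.variance_sum_mul s c)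
  have hlaw : HasLaw (fun ω => ∑ j, c j * B ω (g (t j)) + ∑ j, c j * h (t j))
      (gaussianReal (∑ j, c j * h (t j))
        (∑ j, ∑ l, c j * c l * min (g (t j)) (g (t l))).toNNReal) P := by
    have hshift := gaussianReal_add_const (hW.hasLaw_sum_mul s c) (∑ j, c j * h (t j))
    rwa [zero_add] at hshift
  have hF := ContinuousMap.measurable_comp_add (Y := ℝ) g h
  rw [Measure.map_map hF hB,
    integral_map (hF.comp hB).aemeasurable (by fun_prop : Continuous _).aestronglyMeasurable]
  have hsplit : ∀ ω, ∑ j, c j * ((B ω).comp g + h) (t j)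
      = ∑ j, c j * B ω (g (t j)) + ∑ j, c j * h (t j) := fun ω => by
    simp only [ContinuousMap.add_apply, ContinuousMap.comp_apply, mul_add, Finset.sum_add_distrib]
  simp only [Function.comp_apply, hsplit]
  change complexMGF _ P Complex.I = _
  rw [complexMGF_gaussianReal hlaw.map_eq, Real.coe_toNNReal _ hv, Complex.I_sq]
  congr 1
  ring

theorem condExp_comap_ae_eq_integral_map_of_indepFun [IsFiniteMeasure P]
    {E F G : Type*} [MeasurableSpace E] [MeasurableSpace F]
    [NormedAddCommGroup G] [NormedSpace ℝ G] [CompleteSpace G]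
    {X : Ω → E} {Y : Ω → F} (hX : Measurable X) (hY : Measurable Y) (hXY : IndepFun X Y P)
    {φ : E × F → G} (hφm : StronglyMeasurable φ) (hφ : Integrable φ ((P.map X).prod (P.map Y))) :
    P[fun ω => φ (X ω, Y ω) | MeasurableSpace.comap Y inferInstance]
      =ᵐ[P] fun ω => ∫ x, φ (x, Y ω) ∂(P.map X) := by
  have hXYm : Measurable fun ω => (X ω, Y ω) := hX.prodMk hY
  have hjoint : P.map (fun ω => (X ω, Y ω)) = (P.map X).prod (P.map Y) :=
    (indepFun_iff_map_prod_eq_prod_map_map hX.aemeasurable hY.aemeasurable).mp hXY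
  have hψm : StronglyMeasurable fun y => ∫ x, φ (x, y) ∂(P.map X) := hφm.integral_prod_left'
  have hψ : Integrable (fun y => ∫ x, φ (x, y) ∂(P.map X)) (P.map Y) := hφ.integral_prod_right
  refine (ae_eq_condExp_of_forall_setIntegral_eq hY.comap_le ?_ (fun _ _ _ => ?_) ?_ ?_).symm
  · rw [← hjoint] at hφ
    exact hφ.comp_measurable hXYm
  · exact (hψ.comp_measurable hY).integrableOn
  · rintro _ ⟨S, hS, rfl⟩ -
    calc ∫ ω in Y ⁻¹' S, ∫ x, φ (x, Y ω) ∂P.map X ∂P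
        = ∫ y in S, ∫ x, φ (x, y) ∂P.map X ∂P.map Y :=
          (setIntegral_map hS hψm.aestronglyMeasurable hY.aemeasurable).symm
      _ = ∫ p in Set.univ ×ˢ S, φ p ∂(P.map X).prod (P.map Y) := by
          have hφS := hφ.restrict (s := Set.univ ×ˢ S)
          rw [← Measure.prod_restrict, Measure.restrict_univ] at hφS ⊢
          exact (integral_prod_symm φ hφS).symm
      _ = ∫ ω in Y ⁻¹' S, φ (X ω, Y ω) ∂P := by
          rw [← hjoint, setIntegral_map (MeasurableSet.univ.prod hS) hφm.aestronglyMeasurable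
            hXYm.aemeasurable, Set.mk_preimage_prod, Set.preimage_univ, Set.univ_inter]
  · exact (hψm.comp_measurable (comap_measurable Y)).aestronglyMeasurable

end

theorem stmt19_general {Ω : Type*} [mΩ : MeasurableSpace Ω]
    (P : Measure Ω) [IsProbabilityMeasure P]
    (T : ℝ)
    [MeasurableSpace C(ℝ, ℝ)] [BorelSpace C(ℝ, ℝ)]
    [MeasurableSpace C(↥(Set.Icc (0:ℝ) T), ℝ)] [BorelSpace C(↥(Set.Icc (0:ℝ) T), ℝ)]
    (B : Ω → C(ℝ, ℝ)) (hBmeas : Measurable B)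
    (hB0 : ∀ᵐ ω ∂P, B ω 0 = 0)
    (hBincr : ∀ (n : ℕ) (t : Fin (n + 1) → ℝ), Monotone t → (∀ j, 0 ≤ t j) →
      iIndepFun
        (fun (j : Fin n) (ω : Ω) => B ω (t j.succ) - B ω (t j.castSucc)) P)
    (hBlaw : ∀ s t : ℝ, 0 ≤ s → s ≤ t →
      P.map (fun ω => B ω t - B ω s) = gaussianReal 0 (Real.toNNReal (t - s)))
    (α : Ω → C(↥(Set.Icc (0:ℝ) T), ℝ)) (hαmeas : Measurable α)
    (hindep : IndepFun B α P)
    (h : C(↥(Set.Icc (0:ℝ) T), ℝ)) :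
    Measurable (fun ω => (B ω).comp (α ω)) ∧
    ∃ m : C(↥(Set.Icc (0:ℝ) T), ℝ) → Measure C(↥(Set.Icc (0:ℝ) T), ℝ),
      (∀ g : C(↥(Set.Icc (0:ℝ) T), ℝ), StrictMono ⇑g →
        (∀ u : ↥(Set.Icc (0:ℝ) T), (u : ℝ) = 0 → g u = 0) →
        (IsProbabilityMeasure (m g) ∧
          ∀ (n : ℕ) (t : Fin n → ↥(Set.Icc (0:ℝ) T)) (c : Fin n → ℝ),
            ∫ y, Complex.exp (Complex.I * ((∑ j, c j * y (t j) : ℝ) : ℂ)) ∂(m g) =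
              Complex.exp (Complex.I * ((∑ j, c j * h (t j) : ℝ) : ℂ) -
                (1 / 2 : ℂ) *
                  ((∑ j, ∑ l, c j * c l * min (g (t j)) (g (t l)) : ℝ) : ℂ)))) ∧
      ∀ V : Set C(↥(Set.Icc (0:ℝ) T), ℝ), MeasurableSet V →
        (fun ω => (m (α ω) V).toReal) =ᵐ[P]
          P[fun ω => Set.indicator V (fun _ => (1 : ℝ)) ((B ω).comp (α ω) + h)|
            MeasurableSpace.comap α inferInstance] := by
  have hW :=
    isPreBrownianReal_of_map_sub_eq_gaussianReal (X := fun t ω => B ω t) hB0 hBincr hBlaw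
  have hcomp : Continuous fun p : C(ℝ, ℝ) × C(Set.Icc (0:ℝ) T, ℝ) => p.1.comp p.2 :=
    continuous_fst.compCM continuous_snd
  have hF : Continuous fun p : C(ℝ, ℝ) × C(Set.Icc (0:ℝ) T, ℝ) => p.1.comp p.2 + h :=
    hcomp.add continuous_const
  have := Measure.isProbabilityMeasure_map (μ := P) hBmeas.aemeasurable
  refine ⟨hcomp.measurable.comp (hBmeas.prodMk hαmeas),
    fun g => (P.map B).map fun b => b.comp g + h,
    fun g hg hg0 => ⟨?_, fun n t c => integral_cexp_map_comp_add hBmeas hW (fun u => ?_) h t c⟩,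
    fun V hV => ?_⟩
  · exact Measure.isProbabilityMeasure_map (ContinuousMap.measurable_comp_add g h).aemeasurable
  · have hu0 : ((⟨0, le_rfl, u.2.1.trans u.2.2⟩ : Set.Icc (0:ℝ) T) : ℝ) = 0 := rfl
    exact (hg0 _ hu0).symm.trans_le (hg.monotone u.2.1)
  · have hφ : Measurable fun p : C(ℝ, ℝ) × C(Set.Icc (0:ℝ) T, ℝ) =>
        V.indicator (fun _ => (1 : ℝ)) (p.1.comp p.2 + h) :=
      (measurable_const.indicator hV).comp hF.measurable
    filter_upwards [condExp_comap_ae_eq_integral_map_of_indepFun hBmeas hαmeas hindep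
      hφ.stronglyMeasurable ((integrable_const (1 : ℝ)).indicator (hF.measurable hV))] with ω hω
    rw [hω, ← integral_map (ContinuousMap.measurable_comp_add (α ω) h).aemeasurable
      (measurable_const.indicator hV).aestronglyMeasurable, integral_indicator_const _ hV,
      smul_eq_mul, mul_one, measureReal_def]

/-- Time-changed Brownian motion: if `B` is a standard Brownian motion (characterized by
`B 0 = 0` a.s., independent increments, and Gaussian increments `B_t − B_s ∼ N(0, t−s)`),
`α` is an independent strictly increasing continuous process with `α 0 = 0`, then
`ε = B ∘ α` defines a `C([0,T])`-valued random variable, and there is a family of measures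
`m g` on `C([0,T])` such that for every admissible deterministic path `g` the measure `m g`
is the Gaussian measure with mean `h` and covariance kernel `min (g t) (g s)` (characterized
by its finite-dimensional characteristic functions), and for every Borel `V ⊆ C([0,T])` the
conditional expectation `E[1_V(B∘α + h) | σ(α)]` is a.s. equal to `ω ↦ m (α ω) V`. -/
theorem stmt19 {Ω : Type*} [mΩ : MeasurableSpace Ω]
    (P : Measure Ω) [IsProbabilityMeasure P] (hP : P.IsComplete)
    (T : ℝ) (hT : 0 < T)
    [MeasurableSpace C(ℝ, ℝ)] [BorelSpace C(ℝ, ℝ)]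
    [MeasurableSpace C(↥(Set.Icc (0:ℝ) T), ℝ)] [BorelSpace C(↥(Set.Icc (0:ℝ) T), ℝ)]
    (B : Ω → C(ℝ, ℝ)) (hBmeas : Measurable B)
    (hB0 : ∀ᵐ ω ∂P, B ω 0 = 0)
    (hBincr : ∀ (n : ℕ) (t : Fin (n + 1) → ℝ), Monotone t → (∀ j, 0 ≤ t j) →
      iIndepFun
        (fun (j : Fin n) (ω : Ω) => B ω (t j.succ) - B ω (t j.castSucc)) P)
    (hBlaw : ∀ s t : ℝ, 0 ≤ s → s ≤ t →
      P.map (fun ω => B ω t - B ω s) = gaussianReal 0 (Real.toNNReal (t - s)))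
    (α : Ω → C(↥(Set.Icc (0:ℝ) T), ℝ)) (hαmeas : Measurable α)
    (hαmono : ∀ ω, StrictMono ⇑(α ω))
    (hα0 : ∀ ω, ∀ u : ↥(Set.Icc (0:ℝ) T), (u : ℝ) = 0 → α ω u = 0)
    (hαnn : ∀ ω u, 0 ≤ α ω u)
    (hindep : IndepFun B α P)
    (h : C(↥(Set.Icc (0:ℝ) T), ℝ)) :
    Measurable (fun ω => (B ω).comp (α ω)) ∧
    ∃ m : C(↥(Set.Icc (0:ℝ) T), ℝ) → Measure C(↥(Set.Icc (0:ℝ) T), ℝ),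
      (∀ g : C(↥(Set.Icc (0:ℝ) T), ℝ), StrictMono ⇑g →
        (∀ u : ↥(Set.Icc (0:ℝ) T), (u : ℝ) = 0 → g u = 0) →
        (IsProbabilityMeasure (m g) ∧
          ∀ (n : ℕ) (t : Fin n → ↥(Set.Icc (0:ℝ) T)) (c : Fin n → ℝ),
            ∫ y, Complex.exp (Complex.I * ((∑ j, c j * y (t j) : ℝ) : ℂ)) ∂(m g) =
              Complex.exp (Complex.I * ((∑ j, c j * h (t j) : ℝ) : ℂ) -
                (1 / 2 : ℂ) *
                  ((∑ j, ∑ l, c j * c l * min (g (t j)) (g (t l)) : ℝ) : ℂ)))) ∧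
      ∀ V : Set C(↥(Set.Icc (0:ℝ) T), ℝ), MeasurableSet V →
        (fun ω => (m (α ω) V).toReal) =ᵐ[P]
          P[fun ω => Set.indicator V (fun _ => (1 : ℝ)) ((B ω).comp (α ω) + h)|
            MeasurableSpace.comap α inferInstance] :=
  stmt19_general (mΩ := mΩ) P T B hBmeas hB0 hBincr hBlaw α hαmeas hindep h
end
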